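/- arXiv:1910.11181 — 3 statements merged into one kernel-verified Lean document; each statement's English description precedes it below -/
import Mathlib

section
/- (Player swap.) Let ε > 0 and s > 0 with s ∈ (0,1) and A ⊆ 2^ω. If player I has a winning strategy in the measure game G(s, A), then player II has a winning strategy in G(1−s, A^c). If player II has a winning strategy in G(s−ε, A) (with s−ε ∈ [0,1)), then player I has a winning strategy in G(1−s, A^c). -/
open MeasureTheory

namespace MeasureGame

/-- Cantor space `2^ω`. -/
abbrev Cantor : Type := ℕ → Bool

/-- The basic cylinder set `N_t` determined by a finite binary string `t`. -/
def cyl (t : List Bool) : Set Cantor := {x | ∀ i : Fin t.length, x i.1 = t.get i}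

/-- A round of the measure game: player I's pair of rationals, then player II's bit. -/
abbrev GRound : Type := (ℚ × ℚ) × Bool

/-- A strategy for player I in the measure game. -/
abbrev StratI : Type := List GRound → ℚ × ℚ

/-- A strategy for player II in the measure game. -/
abbrev StratII : Type := List GRound → ℚ × ℚ → Bool

/-- A run of the measure game. -/
abbrev Run : Type := ℕ → GRound

/-- The history (list of completed rounds) before round `n`. -/
def hist (r : Run) (n : ℕ) : List GRound := (List.range n).map r

/-- Player II's bit at round `n`. -/
def bits (r : Run) (n : ℕ) : Bool := (r n).2

/-- The finite binary string of player II's first `n` bits. -/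
def path (r : Run) (n : ℕ) : List Bool := (List.range n).map (bits r)

/-- The value player I assigned at round `n` to the one-bit extension of the current path by `b`. -/
def valI (r : Run) (n : ℕ) (b : Bool) : ℚ := if b then (r n).1.2 else (r n).1.1

/-- The value selected by player II's move at round `n`. -/
def sel (r : Run) (n : ℕ) : ℚ := valI r n (bits r n)

/-- Legality requirements on the single value player I assigned to `path r n ++ [b]`:
it is nonnegative, at most `μ(N_{t⌢b})`, and strictly below it when the latter is positive. -/
def mOK (μ : Measure Cantor) (r : Run) (n : ℕ) (b : Bool) : Prop :=
  0 ≤ valI r n b ∧ ((valI r n b : ℝ) ≤ (μ (cyl (path r n ++ [b]))).toReal) ∧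
    (0 < (μ (cyl (path r n ++ [b]))).toReal → (valI r n b : ℝ) < (μ (cyl (path r n ++ [b]))).toReal)

/-- Player I's move at round `n` of a run is legal (for the game `G(s, ·)`). -/
def IOK (μ : Measure Cantor) (s : ℝ) (r : Run) : ℕ → Prop
  | 0 => mOK μ r 0 false ∧ mOK μ r 0 true ∧ s < ((r 0).1.1 : ℝ) + ((r 0).1.2 : ℝ)
  | (n + 1) => mOK μ r (n + 1) false ∧ mOK μ r (n + 1) true ∧
      (r (n + 1)).1.1 + (r (n + 1)).1.2 = sel r n

/-- Player II's move at round `n` of a run is legal: the selected value is nonzero. -/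
def IIOK (r : Run) (n : ℕ) : Prop := sel r n ≠ 0

/-- The run `r` is consistent with player I's strategy `σ`. -/
def ConsI (σ : StratI) (r : Run) : Prop := ∀ n, (r n).1 = σ (hist r n)

/-- The run `r` is consistent with player II's strategy `τ`. -/
def ConsII (τ : StratII) (r : Run) : Prop := ∀ n, (r n).2 = τ (hist r n) (r n).1

/-- Player II wins the run `r` of `G(s, A)`: either player I is the first to break a rule,
or all rules are followed and the sequence of II's bits belongs to `A`. -/
def IIWinsRun (μ : Measure Cantor) (s : ℝ) (A : Set Cantor) (r : Run) : Prop :=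
  (∃ n, (∀ m < n, IOK μ s r m ∧ IIOK r m) ∧ ¬ IOK μ s r n) ∨
    ((∀ n, IOK μ s r n ∧ IIOK r n) ∧ bits r ∈ A)

/-- Player I has a winning strategy in the measure game `G(s, A)`. -/
def WinsI (μ : Measure Cantor) (s : ℝ) (A : Set Cantor) : Prop :=
  ∃ σ : StratI, ∀ r : Run, ConsI σ r → ¬ IIWinsRun μ s A r

/-- Player II has a winning strategy in the measure game `G(s, A)`. -/
def WinsII (μ : Measure Cantor) (s : ℝ) (A : Set Cantor) : Prop :=
  ∃ τ : StratII, ∀ r : Run, ConsII τ r → IIWinsRun μ s A r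

/-- The outer measure `μ*(A) = inf {μ(U) : U open, A ⊆ U}`. -/
noncomputable def outerM (μ : Measure Cantor) (A : Set Cantor) : ℝ :=
  sInf {v : ℝ | ∃ U : Set Cantor, IsOpen U ∧ A ⊆ U ∧ v = (μ U).toReal}

/-- The inner measure `μ_*(A) = sup {μ(F) : F closed, F ⊆ A}`. -/
noncomputable def innerM (μ : Measure Cantor) (A : Set Cantor) : ℝ :=
  sSup {v : ℝ | ∃ F : Set Cantor, IsClosed F ∧ F ⊆ A ∧ v = (μ F).toReal}

/-!
Both halves go through *mass trees*: additive rational assignments `w` of masses to the nodes of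
the binary tree that player I may legally play, with root mass above the threshold. The moves of
a winning strategy of player I in `G(s, A)`, cut off below its zero nodes, form such a tree with
root mass `> s` whose nonvanishing branches avoid `A`. Against masses `m` in `G(1 - s, ·)`,
player II keeps `μ(N_u) < m_u + w_u` along the play; it holds at the root because `m_∅ > 1 - s`
and `w_∅ > s`, and it forces both `m` and `w` to stay positive, so player II follows a
nonvanishing branch of `w`.

For the second half, let `τ` win `G(t, A)` for player II, `t = s - ε`, and restrict player I to
masses on the grids `δ / 3 ^ k`, so that the tree of positions reachable against `τ` is finitely
branching. If the strings of length `n` that are not reachable had measure `≥ t + 2δ`, player I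
could play a grid mass tree below them and `τ` would be driven into them. So the set `F` of
branches reachable at every level has measure `≥ 1 - t - 2δ`, Kőnig's lemma gives `F ⊆ A`, and a
mass tree below `μ(F ∩ ·)` with root mass `> 1 - s` is a winning strategy of player I in
`G(1 - s, Aᶜ)`.
-/

def pref (x : Cantor) (n : ℕ) : List Bool := (List.range n).map x

@[simp] lemma length_pref (x : Cantor) (n : ℕ) : (pref x n).length = n := by
  simp [pref]

lemma pref_succ (x : Cantor) (n : ℕ) : pref x (n + 1) = pref x n ++ [x n] := by
  simp [pref, List.range_succ]

lemma take_pref (x : Cantor) {m n : ℕ} (h : m ≤ n) : (pref x n).take m = pref x m := by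
  simp [pref, ← List.map_take, List.take_range, Nat.min_eq_left h]

lemma eq_of_forall_pref_eq {x y : Cantor} (h : ∀ n, pref x n = pref y n) : x = y :=
  funext fun i => by simpa [pref] using congrArg (·[i]?) (h (i + 1))

lemma mem_cyl_iff {x : Cantor} {u : List Bool} : x ∈ cyl u ↔ pref x u.length = u := by
  simp only [cyl, Set.mem_ofPred_eq, List.ext_get_iff, length_pref, true_and]
  exact ⟨fun h i _ hi => by simpa [pref] using h ⟨i, hi⟩,
    fun h i => by simpa [pref] using h i (by simp) i.2⟩

@[simp] lemma cyl_nil : cyl [] = Set.univ :=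
  Set.eq_univ_of_forall fun _ i => i.elim0

lemma cyl_append (u : List Bool) (b : Bool) :
    cyl (u ++ [b]) = cyl u ∩ {x | x u.length = b} := by
  ext x
  simp only [mem_cyl_iff, Set.mem_inter_iff, Set.mem_ofPred_eq, List.length_append,
    List.length_singleton, pref_succ]
  constructor
  · intro h
    obtain ⟨h₁, h₂⟩ := List.append_inj h (by simp)
    exact ⟨h₁, by simpa using h₂⟩
  · rintro ⟨h₁, h₂⟩
    rw [h₁, h₂]

lemma measurableSet_cyl (u : List Bool) : MeasurableSet (cyl u) := by
  simp only [cyl, Set.ofPred_forall]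
  exact .iInter fun i => measurableSet_eq_fun (measurable_pi_apply _) measurable_const

lemma measurableSet_setOf_pref (P : List Bool → Prop) (n : ℕ) :
    MeasurableSet {x : Cantor | P (pref x n)} := by
  have : {x : Cantor | P (pref x n)} = ⋃ (u : List Bool) (_ : P u ∧ u.length = n), cyl u := by
    ext x
    simp only [Set.mem_ofPred_eq, Set.mem_iUnion, mem_cyl_iff, exists_prop]
    exact ⟨fun h => ⟨_, ⟨h, length_pref x n⟩, by simp⟩, by rintro ⟨u, ⟨hu, rfl⟩, h⟩; rwa [h]⟩
  rw [this]
  exact .iUnion fun u => .iUnion fun _ => measurableSet_cyl u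

lemma measureReal_inter_cyl (μ : Measure Cantor) [IsFiniteMeasure μ] (S : Set Cantor)
    (v : List Bool) : μ.real (S ∩ cyl v) =
      μ.real (S ∩ cyl (v ++ [false])) + μ.real (S ∩ cyl (v ++ [true])) := by
  have hT : MeasurableSet {x : Cantor | x v.length = true} :=
    measurableSet_eq_fun (measurable_pi_apply _) measurable_const
  rw [← measureReal_inter_add_sdiff (s := S ∩ cyl v) hT, add_comm]
  congr 2
  · ext x; simp [cyl_append, and_assoc]
  · simp [cyl_append, Set.inter_assoc]

lemma measureReal_cyl (μ : Measure Cantor) [IsFiniteMeasure μ] (v : List Bool) :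
    μ.real (cyl v) = μ.real (cyl (v ++ [false])) + μ.real (cyl (v ++ [true])) := by
  simpa using measureReal_inter_cyl μ Set.univ v

lemma le_measureReal_iInter {α : Type*} [MeasurableSpace α] {μ : Measure α} [IsFiniteMeasure μ]
    {s : ℕ → Set α} {b : ℝ} (hs : Antitone s) (hsm : ∀ n, MeasurableSet (s n))
    (hb : ∀ n, b ≤ μ.real (s n)) : b ≤ μ.real (⋂ n, s n) := by
  rw [measureReal_def, ← ENNReal.ofReal_le_iff_le_toReal (measure_ne_top _ _),
    hs.measure_iInter (fun n => (hsm n).nullMeasurableSet) ⟨0, measure_ne_top _ _⟩]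
  exact le_iInf fun n => (ENNReal.ofReal_le_iff_le_toReal (measure_ne_top _ _)).2 (hb n)

@[simp] lemma length_hist (r : Run) (n : ℕ) : (hist r n).length = n := by simp [hist]

lemma hist_succ (r : Run) (n : ℕ) : hist r (n + 1) = hist r n ++ [r n] := by
  simp [hist, List.range_succ]

lemma take_hist (r : Run) {m n : ℕ} (h : m ≤ n) : (hist r n).take m = hist r m := by
  simp [hist, ← List.map_take, List.take_range, Nat.min_eq_left h]

lemma hist_eq_hist_iff {r r' : Run} {n : ℕ} : hist r n = hist r' n ↔ ∀ i < n, r i = r' i := by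
  simp [hist, List.map_inj_left]

@[simp] lemma length_path (r : Run) (n : ℕ) : (path r n).length = n := length_pref _ n

lemma path_succ (r : Run) (n : ℕ) : path r (n + 1) = path r n ++ [bits r n] := pref_succ _ n

lemma take_path (r : Run) {m n : ℕ} (h : m ≤ n) : (path r n).take m = path r m :=
  take_pref _ h

def bitsOf (h : List GRound) : List Bool := h.map Prod.snd

lemma bitsOf_hist (r : Run) (n : ℕ) : bitsOf (hist r n) = path r n := by
  simp [bitsOf, hist, path, bits]

lemma path_eq_path_of_hist_eq {r r' : Run} {n : ℕ} (h : hist r n = hist r' n) :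
    path r n = path r' n := by
  rw [← bitsOf_hist, h, bitsOf_hist]

def nextRound (σ : StratI) (τ : StratII) (h : List GRound) : GRound := (σ h, τ h (σ h))

def playHist (σ : StratI) (τ : StratII) : ℕ → List GRound
  | 0 => []
  | n + 1 => playHist σ τ n ++ [nextRound σ τ (playHist σ τ n)]

def play (σ : StratI) (τ : StratII) : Run := fun n => nextRound σ τ (playHist σ τ n)

lemma hist_play (σ : StratI) (τ : StratII) (n : ℕ) : hist (play σ τ) n = playHist σ τ n := by
  induction n with
  | zero => rfl
  | succ n ih => rw [hist_succ, ih]; rfl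

lemma consI_play (σ : StratI) (τ : StratII) : ConsI σ (play σ τ) := fun n => by
  rw [hist_play]; rfl

lemma consII_play (σ : StratI) (τ : StratII) : ConsII τ (play σ τ) := fun n => by
  rw [hist_play]; rfl

lemma IOK.mOK {μ : Measure Cantor} {s : ℝ} {r : Run} {n : ℕ} (h : IOK μ s r n) (b : Bool) :
    mOK μ r n b := by
  cases n <;> cases b
  exacts [h.1, h.2.1, h.1, h.2.1]

lemma IOK.sel_le {μ : Measure Cantor} {s : ℝ} {r : Run} {n : ℕ} (h : IOK μ s r n) :
    (sel r n : ℝ) ≤ μ.real (cyl (path r (n + 1))) := by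
  rw [path_succ]
  exact (h.mOK _).2.1

lemma valI_add_valI (r : Run) (n : ℕ) : valI r n false + valI r n true = (r n).1.1 + (r n).1.2 :=
  rfl

section Outcome

variable {μ : Measure Cantor} {s : ℝ} {A : Set Cantor} {r : Run}

lemma IIWinsRun.of_forall_IOK (hr : IIWinsRun μ s A r) (hI : ∀ n, IOK μ s r n) :
    (∀ n, IIOK r n) ∧ bits r ∈ A := by
  rcases hr with ⟨n, -, hn⟩ | ⟨h, hA⟩
  exacts [absurd (hI n) hn, ⟨fun n => (h n).2, hA⟩]

lemma IOK_of_not_IIWinsRun (hr : ¬ IIWinsRun μ s A r) (n : ℕ) (hII : ∀ m < n, IIOK r m) :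
    IOK μ s r n := by
  induction n using Nat.strong_induction_on with
  | _ n ih =>
    by_contra hn
    exact hr (Or.inl ⟨n, fun m hm => ⟨ih m hm fun k hk => hII k (hk.trans hm), hII m hm⟩, hn⟩)

lemma bits_notMem_of_not_IIWinsRun (hr : ¬ IIWinsRun μ s A r) (hII : ∀ n, IIOK r n) :
    bits r ∉ A := fun hA =>
  hr (Or.inr ⟨fun n => ⟨IOK_of_not_IIWinsRun hr n fun m _ => hII m, hII n⟩, hA⟩)

lemma not_IIWinsRun_of_forall_IOK (hI : ∀ n, IOK μ s r n) (hA : (∀ n, IIOK r n) → bits r ∉ A) :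
    ¬ IIWinsRun μ s A r := fun hr =>
  hA (hr.of_forall_IOK hI).1 (hr.of_forall_IOK hI).2

lemma IIWinsRun_of_IIOK (hII : ∀ n, (∀ m ≤ n, IOK μ s r m) → IIOK r n)
    (hA : (∀ n, IOK μ s r n) → bits r ∈ A) : IIWinsRun μ s A r := by
  classical
  by_cases hI : ∀ n, IOK μ s r n
  · exact Or.inr ⟨fun n => ⟨hI n, hII n fun m _ => hI m⟩, hA hI⟩
  · push Not at hI
    refine Or.inl ⟨Nat.find hI, fun m hm => ?_, Nat.find_spec hI⟩
    have hle : ∀ k ≤ m, IOK μ s r k := fun k hk => not_not.1 (Nat.find_min hI (by omega))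
    exact ⟨hle m le_rfl, hII m hle⟩

end Outcome

def IsLegalMass (μ : Measure Cantor) (v : List Bool) (a : ℚ) : Prop :=
  0 ≤ a ∧ (a : ℝ) ≤ μ.real (cyl v) ∧ (0 < μ.real (cyl v) → (a : ℝ) < μ.real (cyl v))

lemma mOK_iff_isLegalMass {μ : Measure Cantor} {r : Run} {n : ℕ} {b : Bool} :
    mOK μ r n b ↔ IsLegalMass μ (path r n ++ [b]) (valI r n b) := Iff.rfl

lemma isLegalMass_of_ne_zero {μ : Measure Cantor} {v : List Bool} {a : ℚ} (h₀ : 0 ≤ a)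
    (h : a ≠ 0 → (a : ℝ) < μ.real (cyl v)) : IsLegalMass μ v a := by
  rcases eq_or_ne a 0 with rfl | ha
  · simp [IsLegalMass, measureReal_nonneg]
  · exact ⟨h₀, (h ha).le, fun _ => h ha⟩

structure MassTree (μ : Measure Cantor) (θ : ℝ) (w : List Bool → ℚ) : Prop where
  legal : ∀ v b, IsLegalMass μ (v ++ [b]) (w (v ++ [b]))
  add : ∀ v, w (v ++ [false]) + w (v ++ [true]) = w v
  root : θ < w []

def nonzeroBranches (w : List Bool → ℚ) : Set Cantor := {x | ∀ n, w (pref x n) ≠ 0}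

namespace MassTree

variable {μ : Measure Cantor} {θ : ℝ} {w : List Bool → ℚ}

lemma ne_zero_of_append (hw : MassTree μ θ w) {v : List Bool} {b : Bool}
    (h : w (v ++ [b]) ≠ 0) : w v ≠ 0 := by
  have h₀ := (hw.legal v false).1
  have h₁ := (hw.legal v true).1
  rw [← hw.add v]
  cases b <;> positivity

lemma mem_nonzeroBranches (hw : MassTree μ θ w) {x : Cantor} (h : ∀ n, w (pref x (n + 1)) ≠ 0) :
    x ∈ nonzeroBranches w
  | 0 => hw.ne_zero_of_append (by simpa [pref_succ] using h 0)
  | n + 1 => h n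

end MassTree

def stratOf (w : List Bool → ℚ) : StratI :=
  fun h => (w (bitsOf h ++ [false]), w (bitsOf h ++ [true]))

section StratOf

variable {μ : Measure Cantor} {θ : ℝ} {w : List Bool → ℚ} {r : Run}

lemma valI_of_consI_stratOf (hr : ConsI (stratOf w) r) (n : ℕ) (b : Bool) :
    valI r n b = w (path r n ++ [b]) := by
  unfold valI
  rw [hr n]
  cases b <;> simp [stratOf, bitsOf_hist]

lemma sel_of_consI_stratOf (hr : ConsI (stratOf w) r) (n : ℕ) : sel r n = w (path r (n + 1)) := by
  rw [sel, valI_of_consI_stratOf hr, path_succ]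

lemma IOK_of_consI_stratOf (hw : MassTree μ θ w) (hr : ConsI (stratOf w) r) (n : ℕ) :
    IOK μ θ r n := by
  have hsum := valI_add_valI r n
  simp only [valI_of_consI_stratOf hr, hw.add] at hsum
  have hlegal (b : Bool) : mOK μ r n b := by
    rw [mOK_iff_isLegalMass, valI_of_consI_stratOf hr]
    exact hw.legal _ b
  cases n with
  | zero => exact ⟨hlegal false, hlegal true, by exact_mod_cast hsum ▸ hw.root⟩
  | succ n => exact ⟨hlegal false, hlegal true, by rw [← hsum, sel_of_consI_stratOf hr]⟩

end StratOf

lemma winsI_of_massTree {μ : Measure Cantor} {θ : ℝ} {w : List Bool → ℚ} {S : Set Cantor}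
    (hw : MassTree μ θ w) (hS : nonzeroBranches w ⊆ Sᶜ) : WinsI μ θ S := by
  refine ⟨stratOf w, fun r hr => not_IIWinsRun_of_forall_IOK (IOK_of_consI_stratOf hw hr)
    fun hII => ?_⟩
  exact hS (hw.mem_nonzeroBranches fun n => sel_of_consI_stratOf hr n ▸ hII n)

noncomputable def counterStrat (μ : Measure Cantor) (w : List Bool → ℚ) : StratII :=
  fun h q => if μ.real (cyl (bitsOf h ++ [false])) < q.1 + w (bitsOf h ++ [false]) then false
    else true

section CounterStrat

variable {μ : Measure Cantor} [IsProbabilityMeasure μ] {θ θ' : ℝ} {w : List Bool → ℚ} {r : Run}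

lemma counterStrat_step (hw : MassTree μ θ w) (hr : ConsII (counterStrat μ w) r) (n : ℕ)
    (h : μ.real (cyl (path r n)) < ((valI r n false + valI r n true : ℚ) : ℝ) + w (path r n)) :
    μ.real (cyl (path r (n + 1))) < sel r n + w (path r (n + 1)) := by
  have hb : bits r n = if μ.real (cyl (path r n ++ [false])) < valI r n false +
      w (path r n ++ [false]) then false else true := by
    rw [bits, hr n, counterStrat, bitsOf_hist]; rfl
  rw [sel, path_succ, hb]
  split_ifs with hlt
  · exact hlt
  · have hadd : ((w (path r n ++ [false]) : ℚ) : ℝ) + w (path r n ++ [true]) = w (path r n) := by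
      exact_mod_cast hw.add _
    have := measureReal_cyl μ (path r n)
    push_cast at h
    linarith

lemma counterStrat_invariant (hw : MassTree μ θ w) (hθ : 1 ≤ θ' + θ)
    (hr : ConsII (counterStrat μ w) r) :
    ∀ n, (∀ m ≤ n, IOK μ θ' r m) →
      μ.real (cyl (path r (n + 1))) < sel r n + w (path r (n + 1))
  | 0, hI => by
    refine counterStrat_step hw hr 0 ?_
    have := (hI 0 le_rfl).2.2
    have := hw.root
    simp only [path, List.range_zero, List.map_nil, cyl_nil, probReal_univ]
    push_cast [valI_add_valI]
    linarith
  | n + 1, hI => by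
    refine counterStrat_step hw hr (n + 1) ?_
    rw [valI_add_valI, (hI (n + 1) le_rfl).2.2]
    exact counterStrat_invariant hw hθ hr n fun m hm => hI m (by omega)

lemma winsII_of_massTree {S : Set Cantor} (hw : MassTree μ θ w) (hθ : 1 ≤ θ' + θ)
    (hS : nonzeroBranches w ⊆ S) : WinsII μ θ' S := by
  refine ⟨counterStrat μ w, fun r hr => ?_⟩
  have hpos (n : ℕ) (hI : ∀ m ≤ n, IOK μ θ' r m) : sel r n ≠ 0 ∧ w (path r (n + 1)) ≠ 0 := by
    have hinv := counterStrat_invariant hw hθ hr n hI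
    have hsel := (hI n le_rfl).sel_le
    have hle : (w (path r (n + 1)) : ℝ) ≤ μ.real (cyl (path r (n + 1))) := by
      rw [path_succ]; exact (hw.legal _ _).2.1
    constructor <;> intro h0 <;> simp only [h0, Rat.cast_zero] at hinv <;> linarith
  exact IIWinsRun_of_IIOK (fun n hI => (hpos n hI).1)
    fun hI => hS (hw.mem_nonzeroBranches fun n => (hpos n fun m _ => hI m).2)

end CounterStrat

def histAlong (σ : StratI) (v : List Bool) : List GRound :=
  v.foldl (fun h b => h ++ [(σ h, b)]) []

lemma histAlong_append (σ : StratI) (v : List Bool) (b : Bool) :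
    histAlong σ (v ++ [b]) = histAlong σ v ++ [(σ (histAlong σ v), b)] := by
  simp [histAlong]

def runAlong (σ : StratI) (x : Cantor) : Run := fun n => (σ (histAlong σ (pref x n)), x n)

lemma hist_runAlong (σ : StratI) (x : Cantor) (n : ℕ) :
    hist (runAlong σ x) n = histAlong σ (pref x n) := by
  induction n with
  | zero => rfl
  | succ n ih => rw [hist_succ, ih, pref_succ, histAlong_append]; rfl

lemma consI_runAlong (σ : StratI) (x : Cantor) : ConsI σ (runAlong σ x) := fun n => by
  rw [hist_runAlong]; rfl

/-- The mass `σ` assigns to the node `v` when player II plays the bits of `v`; at the root, the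
total of its first move. -/
def stratMass (σ : StratI) (v : List Bool) : ℚ :=
  match v.reverse with
  | [] => (σ []).1 + (σ []).2
  | b :: u => if b then (σ (histAlong σ u.reverse)).2 else (σ (histAlong σ u.reverse)).1

lemma stratMass_append (σ : StratI) (v : List Bool) (b : Bool) :
    stratMass σ (v ++ [b]) = if b then (σ (histAlong σ v)).2 else (σ (histAlong σ v)).1 := by
  simp [stratMass]

lemma valI_runAlong (σ : StratI) (x : Cantor) (n : ℕ) (b : Bool) :
    valI (runAlong σ x) n b = stratMass σ (pref x n ++ [b]) := by
  rw [stratMass_append]; rfl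

lemma sel_runAlong (σ : StratI) (x : Cantor) (n : ℕ) :
    sel (runAlong σ x) n = stratMass σ (pref x (n + 1)) := by
  rw [sel, valI_runAlong, pref_succ]; rfl

def Alive (σ : StratI) (v : List Bool) : Prop := ∀ k < v.length, stratMass σ (v.take (k + 1)) ≠ 0

lemma alive_append_iff {σ : StratI} {v : List Bool} {b : Bool} :
    Alive σ (v ++ [b]) ↔ Alive σ v ∧ stratMass σ (v ++ [b]) ≠ 0 := by
  rw [Alive, List.length_append, List.length_singleton, Nat.forall_lt_succ_right,
    List.take_of_length_le (by simp)]
  refine and_congr (forall₂_congr fun k hk => ?_) Iff.rfl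
  rw [List.take_append_of_le_length (by omega)]

lemma alive_pref_iff {σ : StratI} {x : Cantor} {n : ℕ} :
    Alive σ (pref x n) ↔ ∀ m < n, IIOK (runAlong σ x) m := by
  rw [Alive, length_pref]
  refine forall₂_congr fun m hm => ?_
  rw [take_pref _ hm, IIOK, sel_runAlong]

section WinningStrategyI

variable {μ : Measure Cantor} {s : ℝ} {A : Set Cantor} {σ : StratI}

lemma stratMass_children (hσ : ∀ r, ConsI σ r → ¬ IIWinsRun μ s A r) {v : List Bool}
    (hv : Alive σ v) :
    (∀ b, IsLegalMass μ (v ++ [b]) (stratMass σ (v ++ [b]))) ∧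
      stratMass σ (v ++ [false]) + stratMass σ (v ++ [true]) = stratMass σ v := by
  set x : Cantor := fun i => v.getD i false
  have hx : pref x v.length = v := by
    rw [← mem_cyl_iff]
    intro i
    simp [x]
  have hI : IOK μ s (runAlong σ x) v.length :=
    IOK_of_not_IIWinsRun (hσ _ (consI_runAlong σ x)) _ (alive_pref_iff.1 (by rwa [hx]))
  refine ⟨fun b => ?_, ?_⟩
  · have hpath : path (runAlong σ x) v.length = v := hx
    have := mOK_iff_isLegalMass.1 (hI.mOK b)
    rwa [valI_runAlong, hpath, hx] at this
  · have hsum := valI_add_valI (runAlong σ x) v.length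
    simp only [valI_runAlong, hx] at hsum
    rw [hsum]
    match hlen : v.length, hI with
    | 0, _ => rw [List.length_eq_zero_iff.1 hlen]; rfl
    | n + 1, hI => rw [hI.2.2, sel_runAlong, show n + 1 = v.length from hlen.symm, hx]

lemma lt_stratMass_nil (hσ : ∀ r, ConsI σ r → ¬ IIWinsRun μ s A r) : s < stratMass σ [] := by
  have hI : IOK μ s (runAlong σ fun _ => false) 0 :=
    IOK_of_not_IIWinsRun (hσ _ (consI_runAlong σ _)) 0 nofun
  exact_mod_cast hI.2.2

end WinningStrategyI

open Classical in
/-- `stratMass σ`, cut off below the first node of mass zero: such a node ends the game at once,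
so the masses `σ` plays below it obey no rule. -/
noncomputable def aliveMass (σ : StratI) (v : List Bool) : ℚ :=
  if Alive σ v then stratMass σ v else 0

lemma aliveMass_append_of_alive {σ : StratI} {v : List Bool} (hv : Alive σ v) (b : Bool) :
    aliveMass σ (v ++ [b]) = stratMass σ (v ++ [b]) := by
  by_cases h : stratMass σ (v ++ [b]) = 0
  · simp [aliveMass, alive_append_iff, h]
  · simp [aliveMass, alive_append_iff.2 ⟨hv, h⟩]

lemma massTree_of_winsI {μ : Measure Cantor} {s : ℝ} {A : Set Cantor} (h : WinsI μ s A) :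
    ∃ w, MassTree μ s w ∧ nonzeroBranches w ⊆ Aᶜ := by
  obtain ⟨σ, hσ⟩ := h
  refine ⟨aliveMass σ, ⟨fun v b => ?_, fun v => ?_, ?_⟩, fun x hx => ?_⟩
  · by_cases hvb : Alive σ (v ++ [b])
    · rw [aliveMass_append_of_alive (alive_append_iff.1 hvb).1]
      exact (stratMass_children hσ (alive_append_iff.1 hvb).1).1 b
    · simpa [aliveMass, hvb] using isLegalMass_of_ne_zero le_rfl (by simp)
  · by_cases hv : Alive σ v
    · rw [aliveMass_append_of_alive hv, aliveMass_append_of_alive hv,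
        (stratMass_children hσ hv).2, aliveMass, if_pos hv]
    · simp [aliveMass, alive_append_iff, hv]
  · rw [aliveMass, if_pos nofun]
    exact lt_stratMass_nil hσ
  · have halive (n : ℕ) : Alive σ (pref x n) := by
      by_contra h
      exact hx n (by simp [aliveMass, h])
    exact bits_notMem_of_not_IIWinsRun (hσ _ (consI_runAlong σ x))
      fun m => alive_pref_iff.1 (halive (m + 1)) m m.lt_succ_self

def gridStep (δ : ℚ) (k : ℕ) : ℚ := δ / 3 ^ k

def OnGrid (δ : ℚ) (k : ℕ) (a : ℚ) : Prop := ∃ m : ℕ, a = m * gridStep δ k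

noncomputable def gridFloor (g : ℚ) (y : ℝ) : ℚ := ⌊y / g⌋₊ * g

section Grid

variable {δ g : ℚ} {k : ℕ} {a b : ℚ}

lemma gridStep_pos (hδ : 0 < δ) (k : ℕ) : 0 < gridStep δ k := by
  unfold gridStep; positivity

lemma gridStep_eq_three_mul (δ : ℚ) (k : ℕ) : gridStep δ k = 3 * gridStep δ (k + 1) := by
  unfold gridStep; rw [pow_succ]; field_simp

lemma OnGrid.succ (h : OnGrid δ k a) : OnGrid δ (k + 1) a := by
  obtain ⟨m, rfl⟩ := h
  exact ⟨3 * m, by rw [gridStep_eq_three_mul]; push_cast; ring⟩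

lemma OnGrid.min (ha : OnGrid δ k a) (hb : OnGrid δ k b) : OnGrid δ k (min a b) := by
  rcases min_choice a b with h | h <;> rw [h] <;> assumption

lemma OnGrid.sub (hδ : 0 < δ) (ha : OnGrid δ k a) (hb : OnGrid δ k b) (hba : b ≤ a) :
    OnGrid δ k (a - b) := by
  obtain ⟨m, rfl⟩ := ha
  obtain ⟨n, rfl⟩ := hb
  have hnm : n ≤ m := by
    exact_mod_cast le_of_mul_le_mul_right hba (gridStep_pos hδ k)
  exact ⟨m - n, by push_cast [hnm]; ring⟩

lemma onGrid_gridFloor (y : ℝ) : OnGrid δ k (gridFloor (gridStep δ k) y) := ⟨_, rfl⟩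

lemma gridFloor_nonneg (hg : 0 ≤ g) (y : ℝ) : 0 ≤ gridFloor g y := by
  unfold gridFloor; positivity

lemma gridFloor_le_of_ne_zero (hg : 0 < g) {y : ℝ} (h : gridFloor g y ≠ 0) :
    (gridFloor g y : ℝ) ≤ y := by
  have hg' : (0 : ℝ) < g := by exact_mod_cast hg
  have hy : 0 ≤ y / g := by
    by_contra hy
    exact h (by simp [gridFloor, Nat.floor_of_nonpos (le_of_not_ge hy)])
  have := Nat.floor_le hy
  unfold gridFloor
  push_cast
  rwa [le_div_iff₀ hg'] at this

lemma lt_gridFloor_add (hg : 0 < g) (y : ℝ) : y < gridFloor g y + g := by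
  have hg' : (0 : ℝ) < g := by exact_mod_cast hg
  have := Nat.lt_floor_add_one (y / g)
  unfold gridFloor
  push_cast
  rw [div_lt_iff₀ hg'] at this
  linarith

lemma finite_onGrid_le (hδ : 0 < δ) (k : ℕ) (B : ℚ) : {a | OnGrid δ k a ∧ a ≤ B}.Finite := by
  refine ((Set.finite_Iic ⌊B / gridStep δ k⌋₊).image fun m : ℕ => m * gridStep δ k).subset ?_
  rintro _ ⟨⟨m, rfl⟩, hm⟩
  exact ⟨m, Nat.le_floor ((le_div_iff₀ (gridStep_pos hδ k)).2 hm), rfl⟩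

end Grid

/-- `splitMass` read on reversed strings, so that it is defined by structural recursion. -/
noncomputable def splitMassRev (c : List Bool → ℝ) (δ : ℚ) : List Bool → ℚ
  | [] => gridFloor (gridStep δ 0) (c [] - gridStep δ 0)
  | b :: u =>
    let g := gridStep δ (u.length + 1)
    let a := min (splitMassRev c δ u) (gridFloor g (c (u.reverse ++ [false]) - g))
    if b then splitMassRev c δ u - a else a

/-- A mass tree with values on the grids `gridStep δ k` lying below the additive function `c`:
each node gives its left child as much mass as the grid allows there, and the rest to the right
child. -/
noncomputable def splitMass (c : List Bool → ℝ) (δ : ℚ) (v : List Bool) : ℚ :=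
  splitMassRev c δ v.reverse

noncomputable def splitCut (c : List Bool → ℝ) (δ : ℚ) (u : List Bool) : ℚ :=
  min (splitMass c δ u)
    (gridFloor (gridStep δ (u.length + 1)) (c (u ++ [false]) - gridStep δ (u.length + 1)))

section SplitMass

variable {c : List Bool → ℝ} {δ : ℚ}

lemma splitMass_nil : splitMass c δ [] = gridFloor (gridStep δ 0) (c [] - gridStep δ 0) := rfl

lemma splitMass_append (u : List Bool) (b : Bool) :
    splitMass c δ (u ++ [b]) = if b then splitMass c δ u - splitCut c δ u else splitCut c δ u := by
  simp [splitMass, splitMassRev, splitCut]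

lemma splitMass_add (u : List Bool) :
    splitMass c δ (u ++ [false]) + splitMass c δ (u ++ [true]) = splitMass c δ u := by
  simp [splitMass_append]

lemma splitCut_spec (hδ : 0 < δ) {u : List Bool} (hm₀ : 0 ≤ splitMass c δ u)
    (hmgrid : OnGrid δ u.length (splitMass c δ u)) :
    0 ≤ splitCut c δ u ∧ splitCut c δ u ≤ splitMass c δ u ∧
      OnGrid δ (u.length + 1) (splitCut c δ u) ∧
      (splitCut c δ u ≠ 0 → splitCut c δ u + gridStep δ (u.length + 1) ≤ c (u ++ [false])) := by
  set g := gridStep δ (u.length + 1)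
  have hg : 0 < g := gridStep_pos hδ _
  set F := gridFloor g (c (u ++ [false]) - g)
  have hcut : splitCut c δ u = min (splitMass c δ u) F := rfl
  have hF₀ : 0 ≤ F := gridFloor_nonneg hg.le _
  refine ⟨le_min hm₀ hF₀, min_le_left _ _, hmgrid.succ.min (onGrid_gridFloor _), fun h => ?_⟩
  have hFne : F ≠ 0 := fun hF => h (by rw [hcut, hF, min_eq_right hm₀])
  have hFle := gridFloor_le_of_ne_zero hg hFne
  have : (splitCut c δ u : ℝ) ≤ F := by exact_mod_cast min_le_right _ _
  linarith

/-- The margin `gridStep δ |u|` left below `c u` is three times the next one; this pays for the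
rounding error made at the left child. -/
lemma splitMass_sub_splitCut_spec (hδ : 0 < δ)
    (hc : ∀ v, c v = c (v ++ [false]) + c (v ++ [true])) {u : List Bool}
    (hm₀ : 0 ≤ splitMass c δ u)
    (hm : splitMass c δ u ≠ 0 → splitMass c δ u + gridStep δ u.length ≤ c u)
    (h : splitMass c δ u - splitCut c δ u ≠ 0) :
    ((splitMass c δ u - splitCut c δ u : ℚ) : ℝ) + gridStep δ (u.length + 1) ≤ c (u ++ [true]) := by
  set g := gridStep δ (u.length + 1)
  have hg : 0 < g := gridStep_pos hδ _
  set F := gridFloor g (c (u ++ [false]) - g)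
  have hcut : splitCut c δ u = min (splitMass c δ u) F := rfl
  have hcut₀ : 0 ≤ splitCut c δ u := le_min hm₀ (gridFloor_nonneg hg.le _)
  have hcutm : splitCut c δ u ≤ splitMass c δ u := min_le_left _ _
  have hlt : splitCut c δ u < splitMass c δ u := lt_of_le_of_ne hcutm fun he => h (by simp [he])
  have hcutF : splitCut c δ u = F := by
    rw [hcut] at hlt ⊢
    exact min_eq_right (min_lt_iff.1 hlt |>.resolve_left (lt_irrefl _)).le
  have hmc := hm fun h0 => by simp [h0, le_antisymm (h0 ▸ hcutm) hcut₀] at h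
  have hFlt : c (u ++ [false]) - g < F + g := lt_gridFloor_add hg _
  have h3 : (gridStep δ u.length : ℝ) = 3 * g := by exact_mod_cast gridStep_eq_three_mul δ _
  have := hc u
  rw [hcutF]
  push_cast
  linarith

lemma splitMass_spec (hδ : 0 < δ) (hc : ∀ v, c v = c (v ++ [false]) + c (v ++ [true]))
    (v : List Bool) :
    0 ≤ splitMass c δ v ∧ OnGrid δ v.length (splitMass c δ v) ∧
      (splitMass c δ v ≠ 0 → splitMass c δ v + gridStep δ v.length ≤ c v) := by
  induction v using List.reverseRecOn with
  | nil =>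
    refine ⟨gridFloor_nonneg (gridStep_pos hδ 0).le _, onGrid_gridFloor _, fun h => ?_⟩
    have := gridFloor_le_of_ne_zero (gridStep_pos hδ 0) h
    simp only [splitMass_nil, List.length_nil] at this ⊢
    linarith
  | append_singleton u b ih =>
    obtain ⟨hm₀, hmgrid, hm⟩ := ih
    obtain ⟨hcut₀, hcutm, hcutgrid, hcut⟩ := splitCut_spec hδ hm₀ hmgrid
    rw [splitMass_append, List.length_append, List.length_singleton]
    cases b with
    | false => exact ⟨hcut₀, hcutgrid, hcut⟩
    | true =>
      exact ⟨sub_nonneg.2 hcutm, hmgrid.succ.sub hδ hcutgrid hcutm,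
        splitMass_sub_splitCut_spec hδ hc hm₀ hm⟩

lemma massTree_splitMass {μ : Measure Cantor} {θ : ℝ} (hδ : 0 < δ)
    (hc : ∀ v, c v = c (v ++ [false]) + c (v ++ [true])) (hcμ : ∀ v, c v ≤ μ.real (cyl v))
    (hroot : θ + 2 * δ ≤ c []) : MassTree μ θ (splitMass c δ) where
  legal v b := by
    obtain ⟨h₀, -, hle⟩ := splitMass_spec hδ hc (v ++ [b])
    refine isLegalMass_of_ne_zero h₀ fun h => ?_
    have : (0 : ℝ) < gridStep δ (v ++ [b]).length := by exact_mod_cast gridStep_pos hδ _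
    have := hle h
    have := hcμ (v ++ [b])
    linarith
  add := splitMass_add
  root := by
    have := lt_gridFloor_add (gridStep_pos hδ 0) (c [] - gridStep δ 0)
    simp only [gridStep, pow_zero, div_one] at this
    rw [splitMass_nil]
    simp only [gridStep, pow_zero, div_one]
    linarith

lemma pos_of_splitMass_ne_zero (hδ : 0 < δ) (hc : ∀ v, c v = c (v ++ [false]) + c (v ++ [true]))
    {v : List Bool} (h : splitMass c δ v ≠ 0) : 0 < c v := by
  obtain ⟨h₀, -, hle⟩ := splitMass_spec hδ hc v
  have : (0 : ℝ) < gridStep δ v.length := by exact_mod_cast gridStep_pos hδ _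
  have : (0 : ℝ) ≤ splitMass c δ v := by exact_mod_cast h₀
  have := hle h
  linarith

end SplitMass

theorem exists_branch_of_finite_branching {β : Type*} (P : List β → Prop)
    (hpre : ∀ h h', P (h ++ h') → P h) (hfin : ∀ h, {b | P (h ++ [b])}.Finite)
    (hlong : ∀ n, ∃ h, h.length = n ∧ P h) :
    ∃ f : ℕ → β, ∀ n, P ((List.range n).map f) := by
  let α (i : ℕ) : Type _ := {h : List β // h.length = i ∧ P h}
  have : ∀ i, Nonempty (α i) := fun i => let ⟨h, hh⟩ := hlong i; ⟨⟨h, hh⟩⟩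
  have : Subsingleton (α 0) := ⟨fun a b => Subtype.ext <| by
    rw [List.length_eq_zero_iff.1 a.2.1, List.length_eq_zero_iff.1 b.2.1]⟩
  have : Finite (α 0) := Finite.of_subsingleton
  let π {i j : ℕ} (hij : i ≤ j) (a : α j) : α i :=
    ⟨a.1.take i, by simp [a.2.1, hij],
      hpre _ (a.1.drop i) (by rw [List.take_append_drop]; exact a.2.2)⟩
  have hfib (i : ℕ) (a : α i) : {b : α (i + 1) | π (Nat.le_add_right i 1) b = a}.Finite := by
    let last (b : α (i + 1)) : β := b.1.getLast (List.ne_nil_of_length_eq_add_one b.2.1)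
    have hlast (b : α (i + 1)) (hb : π (Nat.le_add_right i 1) b = a) : b.1 = a.1 ++ [last b] := by
      have hd : b.1.dropLast = b.1.take i := by simp [List.dropLast_eq_take, b.2.1]
      rw [← hb]
      change b.1 = b.1.take i ++ _
      rw [← hd, List.dropLast_append_getLast]
    refine .of_injOn (f := last) (fun b hb => ?_) (fun b hb b' hb' he => ?_) (hfin a.1)
    · change P (a.1 ++ [_])
      rw [← hlast b hb]
      exact b.2.2
    · exact Subtype.ext (by rw [hlast b hb, hlast b' hb', he])
  obtain ⟨f, hf⟩ := exists_seq_forall_proj_of_forall_finite π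
    (fun i a => Subtype.ext (List.take_of_length_le a.2.1.le))
    (fun i j k hij hjk a => Subtype.ext (by simp [π, List.take_take, min_eq_left hij])) hfib
  refine ⟨fun n => (f (n + 1)).1[n]'(by simp [(f (n + 1)).2.1]), fun n => ?_⟩
  convert (f n).2.2
  refine List.ext_getElem? fun i => ?_
  rw [List.getElem?_map]
  rcases lt_or_ge i n with hi | hi
  · have := congrArg Subtype.val (hf (show i + 1 ≤ n from hi))
    simp only [π] at this
    simp [hi, ← this]
  · simp [hi, (f n).2.1]

def GridLegal (μ : Measure Cantor) (t : ℝ) (τ : StratII) (δ : ℚ) (r : Run) (m : ℕ) : Prop :=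
  IOK μ t r m ∧ IIOK r m ∧ OnGrid δ (m + 1) (r m).1.1 ∧ OnGrid δ (m + 1) (r m).1.2 ∧
    (r m).2 = τ (hist r m) (r m).1

def GridPosition (μ : Measure Cantor) (t : ℝ) (τ : StratII) (δ : ℚ) (x : Cantor)
    (h : List GRound) : Prop :=
  ∃ r, hist r h.length = h ∧ (∀ m < h.length, GridLegal μ t τ δ r m) ∧
    path r h.length = pref x h.length

def GridReachable (μ : Measure Cantor) (t : ℝ) (τ : StratII) (δ : ℚ) (u : List Bool) : Prop :=
  ∃ r, (∀ m < u.length, GridLegal μ t τ δ r m) ∧ path r u.length = u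

section WinningStrategyII

variable {μ : Measure Cantor} {t : ℝ} {τ : StratII} {δ : ℚ} {A : Set Cantor}

lemma GridLegal.congr {r r' : Run} {m : ℕ} (h : hist r (m + 1) = hist r' (m + 1))
    (hg : GridLegal μ t τ δ r m) : GridLegal μ t τ δ r' m := by
  have hi := hist_eq_hist_iff.1 h
  have hm : r m = r' m := hi m m.lt_succ_self
  have hhist : hist r m = hist r' m := hist_eq_hist_iff.2 fun i hi' => hi i (by omega)
  have hpath : path r m = path r' m := path_eq_path_of_hist_eq hhist
  have hsel {n : ℕ} (hn : r n = r' n) : sel r n = sel r' n := by unfold sel valI bits; rw [hn]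
  have hmOK (b : Bool) : mOK μ r m b → mOK μ r' m b := by unfold mOK valI; rw [hm, hpath]; exact id
  obtain ⟨hI, hII, h₁, h₂, h₃⟩ := hg
  refine ⟨?_, (hsel hm ▸ hII : sel r' m ≠ 0), hm ▸ h₁, hm ▸ h₂, hm ▸ hhist ▸ h₃⟩
  cases m with
  | zero => exact ⟨hmOK _ hI.1, hmOK _ hI.2.1, hm ▸ hI.2.2⟩
  | succ m => exact ⟨hmOK _ hI.1, hmOK _ hI.2.1, hm ▸ hsel (hi m (by omega)) ▸ hI.2.2⟩

lemma GridReachable.take {u : List Bool} (h : GridReachable μ t τ δ u) (k : ℕ) :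
    GridReachable μ t τ δ (u.take k) := by
  obtain ⟨r, hr, hpath⟩ := h
  refine ⟨r, fun m hm => hr m (by simp at hm; omega), ?_⟩
  rw [List.length_take, ← take_path r (min_le_right k u.length), hpath]
  simp

lemma GridPosition.of_append {x : Cantor} {h h' : List GRound}
    (hp : GridPosition μ t τ δ x (h ++ h')) : GridPosition μ t τ δ x h := by
  obtain ⟨r, hh, hl, hp⟩ := hp
  have hle : h.length ≤ (h ++ h').length := by simp
  refine ⟨r, ?_, fun m hm => hl m (by omega), ?_⟩
  · rw [← take_hist r hle, hh, List.take_left]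
  · rw [← take_path r hle, hp, take_pref x hle]

lemma GridReachable.exists_gridPosition {x : Cantor} {n : ℕ}
    (hx : GridReachable μ t τ δ (pref x n)) : ∃ h, h.length = n ∧ GridPosition μ t τ δ x h := by
  obtain ⟨r, hl, hp⟩ := hx
  simp only [length_pref] at hl hp
  exact ⟨hist r n, length_hist r n, r, by simp, by simpa using hl, by simpa using hp⟩

variable [IsProbabilityMeasure μ]

lemma finite_setOf_gridPosition_append (hδ : 0 < δ) (x : Cantor) (h : List GRound) :
    {q | GridPosition μ t τ δ x (h ++ [q])}.Finite := by
  set G := {a | OnGrid δ (h.length + 1) a ∧ a ≤ 1}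
  have hG : G.Finite := finite_onGrid_le hδ _ 1
  refine ((hG.prod hG).prod Set.finite_univ).subset ?_
  rintro q ⟨r, hh, hl, -⟩
  simp only [List.length_append, List.length_singleton] at hh hl
  have hq : r h.length = q := by
    rw [hist_succ] at hh
    simpa using (List.append_inj hh (by simp)).2
  obtain ⟨hI, -, h₁, h₂, -⟩ := hl h.length (by omega)
  have hle (b : Bool) : (valI r h.length b : ℝ) ≤ 1 := (hI.mOK b).2.1.trans measureReal_le_one
  subst hq
  exact ⟨⟨⟨h₁, by exact_mod_cast hle false⟩, h₂, by exact_mod_cast hle true⟩, trivial⟩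

/-- Player I plays a grid mass tree below `μ(S ∩ N_v)` against `τ`. -/
lemma exists_gridLegal_run_meeting (hδ : 0 < δ) (hτ : ∀ r, ConsII τ r → IIWinsRun μ t A r)
    {S : Set Cantor} (hS : t + 2 * δ ≤ μ.real S) :
    ∃ r, (∀ m, GridLegal μ t τ δ r m) ∧ ∀ n, (S ∩ cyl (path r n)).Nonempty := by
  set c : List Bool → ℝ := fun v => μ.real (S ∩ cyl v)
  have hc (v : List Bool) : c v = c (v ++ [false]) + c (v ++ [true]) := measureReal_inter_cyl μ S v
  have hw : MassTree μ t (splitMass c δ) :=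
    massTree_splitMass hδ hc (fun v => measureReal_mono Set.inter_subset_right) (by simpa [c])
  set r := play (stratOf (splitMass c δ)) τ
  have hrI := consI_play (stratOf (splitMass c δ)) τ
  have hI := IOK_of_consI_stratOf hw hrI
  obtain ⟨hII, -⟩ := (hτ r (consII_play _ τ)).of_forall_IOK hI
  have hgrid (m : ℕ) (b : Bool) : OnGrid δ (m + 1) (valI r m b) := by
    have := (splitMass_spec hδ hc (path r m ++ [b])).2.1
    rwa [List.length_append, length_path, List.length_singleton, ← valI_of_consI_stratOf hrI]
      at this
  refine ⟨r, fun m => ⟨hI m, hII m, hgrid m false, hgrid m true, consII_play _ τ m⟩, fun n => ?_⟩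
  have hx : bits r ∈ nonzeroBranches (splitMass c δ) :=
    hw.mem_nonzeroBranches fun n => sel_of_consI_stratOf hrI n ▸ hII n
  exact nonempty_of_measureReal_ne_zero (pos_of_splitMass_ne_zero hδ hc (hx n)).ne'

lemma le_measureReal_gridReachable (hδ : 0 < δ) (hτ : ∀ r, ConsII τ r → IIWinsRun μ t A r)
    (n : ℕ) : 1 - t - 2 * δ ≤ μ.real {x | GridReachable μ t τ δ (pref x n)} := by
  set L := {x | GridReachable μ t τ δ (pref x n)}
  have hL : MeasurableSet L := measurableSet_setOf_pref _ n
  by_contra! hlt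
  obtain ⟨r, hr, hmeet⟩ := exists_gridLegal_run_meeting hδ hτ (S := Lᶜ)
    (by rw [probReal_compl_eq_one_sub hL]; linarith)
  obtain ⟨y, hyL, hy⟩ := hmeet n
  rw [mem_cyl_iff, length_path] at hy
  refine hyL ?_
  change GridReachable μ t τ δ (pref y n)
  rw [hy]
  exact ⟨r, fun m _ => hr m, by rw [length_path]⟩

lemma mem_of_forall_gridReachable (hδ : 0 < δ) (hτ : ∀ r, ConsII τ r → IIWinsRun μ t A r)
    {x : Cantor} (hx : ∀ n, GridReachable μ t τ δ (pref x n)) : x ∈ A := by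
  obtain ⟨f, hf⟩ := exists_branch_of_finite_branching (GridPosition μ t τ δ x)
    (fun _ _ => GridPosition.of_append) (finite_setOf_gridPosition_append hδ x)
    fun n => (hx n).exists_gridPosition
  have hlegal (m : ℕ) : GridLegal μ t τ δ f m := by
    obtain ⟨r, hr, hl, -⟩ := hf (m + 1)
    simp only [List.length_map, List.length_range] at hr hl
    exact (hl m m.lt_succ_self).congr hr
  have hbits : bits f = x := eq_of_forall_pref_eq fun n => by
    obtain ⟨r, hr, -, hp⟩ := hf n
    simp only [List.length_map, List.length_range] at hr hp
    exact (path_eq_path_of_hist_eq hr).symm.trans hp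
  rw [← hbits]
  exact ((hτ f fun m => (hlegal m).2.2.2.2).of_forall_IOK fun m => (hlegal m).1).2

lemma massTree_of_winsII {θ : ℝ} (h : WinsII μ t A) (hθ : θ < 1 - t) :
    ∃ w, MassTree μ θ w ∧ nonzeroBranches w ⊆ A := by
  obtain ⟨τ, hτ⟩ := h
  obtain ⟨δ, hδ, hδθ⟩ : ∃ δ : ℚ, 0 < δ ∧ (δ : ℝ) < (1 - t - θ) / 4 :=
    let ⟨q, h₀, h₁⟩ := exists_rat_btwn (show (0 : ℝ) < (1 - t - θ) / 4 by linarith)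
    ⟨q, by exact_mod_cast h₀, h₁⟩
  set L : ℕ → Set Cantor := fun n => {x | GridReachable μ t τ δ (pref x n)}
  have hL : Antitone L := fun m n hmn x hx => by
    simpa [L, take_pref x hmn] using GridReachable.take hx m
  have hF := le_measureReal_iInter hL (fun n => measurableSet_setOf_pref _ n)
    (le_measureReal_gridReachable hδ hτ)
  set c : List Bool → ℝ := fun v => μ.real ((⋂ n, L n) ∩ cyl v)
  have hc (v : List Bool) : c v = c (v ++ [false]) + c (v ++ [true]) := measureReal_inter_cyl μ _ v
  refine ⟨splitMass c δ, massTree_splitMass hδ hc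
    (fun v => measureReal_mono Set.inter_subset_right)
    (by simp only [c, cyl_nil, Set.inter_univ]; linarith), fun x hx => ?_⟩
  refine mem_of_forall_gridReachable hδ hτ fun n => ?_
  obtain ⟨y, hyF, hy⟩ :=
    nonempty_of_measureReal_ne_zero (pos_of_splitMass_ne_zero hδ hc (hx n)).ne'
  rw [mem_cyl_iff, length_pref] at hy
  exact hy ▸ Set.mem_iInter.1 hyF n

end WinningStrategyII

theorem player_swap_general (μ : Measure Cantor) [IsProbabilityMeasure μ]
    (A : Set Cantor) (s ε : ℝ) (hε : 0 < ε) :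
    (WinsI μ s A → WinsII μ (1 - s) Aᶜ) ∧
    (WinsII μ (s - ε) A → WinsI μ (1 - s) Aᶜ) := by
  constructor
  · intro h
    obtain ⟨w, hw, hA⟩ := massTree_of_winsI h
    exact winsII_of_massTree hw (by linarith) hA
  · intro h
    obtain ⟨w, hw, hA⟩ := massTree_of_winsII (θ := 1 - s) h (by linarith)
    exact winsI_of_massTree hw (by rwa [compl_compl])

/-- Player swap for the measure game: if player I wins `G(s, A)` then player II wins
`G(1-s, Aᶜ)`, and if player II wins `G(s-ε, A)` then player I wins `G(1-s, Aᶜ)`. -/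
theorem player_swap (μ : Measure Cantor) [IsProbabilityMeasure μ]
    (A : Set Cantor) (s ε : ℝ) (hε : 0 < ε) (hs0 : 0 < s) (hs1 : s < 1) (hεs : ε ≤ s) :
    (WinsI μ s A → WinsII μ (1 - s) Aᶜ) ∧
    (WinsII μ (s - ε) A → WinsI μ (1 - s) Aᶜ) :=
  player_swap_general μ A s ε hε

end MeasureGame
end

section
/- Let A ⊆ 2^ω and s ∈ [0,1). Then the measure game G(s,A) is equivalent to the game G'(s,A) played with the same rules except that player I's moves m_t are allowed to be arbitrary real numbers: for each player, that player has a winning strategy in G(s,A) if and only if that player has a winning strategy in G'(s,A). -/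
open MeasureTheory

namespace MeasureGame

/-! The game `G'(s, A)`: identical to `G(s, A)`, except that player I's moves are
arbitrary real numbers rather than rationals. -/

/-- A round of the real-valued measure game. -/
abbrev GRoundR : Type := (ℝ × ℝ) × Bool

/-- A strategy for player I in the real-valued game. -/
abbrev StratIR : Type := List GRoundR → ℝ × ℝ

/-- A strategy for player II in the real-valued game. -/
abbrev StratIIR : Type := List GRoundR → ℝ × ℝ → Bool

/-- A run of the real-valued game. -/
abbrev RunR : Type := ℕ → GRoundR

def histR (r : RunR) (n : ℕ) : List GRoundR := (List.range n).map r

def bitsR (r : RunR) (n : ℕ) : Bool := (r n).2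

def pathR (r : RunR) (n : ℕ) : List Bool := (List.range n).map (bitsR r)

def valIR (r : RunR) (n : ℕ) (b : Bool) : ℝ := if b then (r n).1.2 else (r n).1.1

def selR (r : RunR) (n : ℕ) : ℝ := valIR r n (bitsR r n)

def mOKR (μ : Measure Cantor) (r : RunR) (n : ℕ) (b : Bool) : Prop :=
  0 ≤ valIR r n b ∧ (valIR r n b ≤ (μ (cyl (pathR r n ++ [b]))).toReal) ∧
    (0 < (μ (cyl (pathR r n ++ [b]))).toReal → valIR r n b < (μ (cyl (pathR r n ++ [b]))).toReal)

def IOKR (μ : Measure Cantor) (s : ℝ) (r : RunR) : ℕ → Prop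
  | 0 => mOKR μ r 0 false ∧ mOKR μ r 0 true ∧ s < (r 0).1.1 + (r 0).1.2
  | (n + 1) => mOKR μ r (n + 1) false ∧ mOKR μ r (n + 1) true ∧
      (r (n + 1)).1.1 + (r (n + 1)).1.2 = selR r n

def IIOKR (r : RunR) (n : ℕ) : Prop := selR r n ≠ 0

def ConsIR (σ : StratIR) (r : RunR) : Prop := ∀ n, (r n).1 = σ (histR r n)

def ConsIIR (τ : StratIIR) (r : RunR) : Prop := ∀ n, (r n).2 = τ (histR r n) (r n).1

def IIWinsRunR (μ : Measure Cantor) (s : ℝ) (A : Set Cantor) (r : RunR) : Prop :=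
  (∃ n, (∀ m < n, IOKR μ s r m ∧ IIOKR r m) ∧ ¬ IOKR μ s r n) ∨
    ((∀ n, IOKR μ s r n ∧ IIOKR r n) ∧ bitsR r ∈ A)

/-- Player I has a winning strategy in the real-valued game `G'(s, A)`. -/
def WinsIR (μ : Measure Cantor) (s : ℝ) (A : Set Cantor) : Prop :=
  ∃ σ : StratIR, ∀ r : RunR, ConsIR σ r → ¬ IIWinsRunR μ s A r

/-- Player II has a winning strategy in the real-valued game `G'(s, A)`. -/
def WinsIIR (μ : Measure Cantor) (s : ℝ) (A : Set Cantor) : Prop :=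
  ∃ τ : StratIIR, ∀ r : RunR, ConsIIR τ r → IIWinsRunR μ s A r

/-! ### Auxiliary machinery for the equivalence proof -/

noncomputable section Aux

/-- Value of a rational pair at a bit. -/
def selQ (q : ℚ × ℚ) (b : Bool) : ℚ := if b then q.2 else q.1

/-- Value of a real pair at a bit. -/
def selP (p : ℝ × ℝ) (b : Bool) : ℝ := if b then p.2 else p.1

/-- Measure of the one-bit extension of a path. -/
def MM (μ : Measure Cantor) (t : List Bool) (b : Bool) : ℝ := (μ (cyl (t ++ [b]))).toReal

/-- Legality of a single real value with bound `M`. -/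
def ok1 (M a : ℝ) : Prop := 0 ≤ a ∧ a ≤ M ∧ (0 < M → a < M)

/-- Legality of a real pair at a path. -/
def okp (μ : Measure Cantor) (t : List Bool) (p : ℝ × ℝ) : Prop :=
  ok1 (MM μ t false) p.1 ∧ ok1 (MM μ t true) p.2

/-- Sum condition for a real pair: at the root (`prev = none`) the sum must exceed `s`;
later it must equal the previously selected (real) value. -/
def sumOK (s : ℝ) (prev : Option (ℚ × ℝ)) (x : ℝ) : Prop :=
  match prev with
  | none => s < x
  | some (_, cR) => x = cR

/-- Full legality of a real move. -/
def RL (μ : Measure Cantor) (s : ℝ) (t : List Bool) (prev : Option (ℚ × ℝ)) (p : ℝ × ℝ) :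
    Prop :=
  okp μ t p ∧ sumOK s prev (p.1 + p.2)

/-- The simulation invariant: the rational selected value is positive and strictly below
the real selected value. -/
def Inv : Option (ℚ × ℝ) → Prop
  | none => True
  | some (c, cR) => 0 < c ∧ (c : ℝ) < cR

/-- Sum condition for the rational approximating pair. -/
def sumOKQ (s : ℝ) (prev : Option (ℚ × ℝ)) (q : ℚ × ℚ) : Prop :=
  match prev with
  | none => s < (q.1 : ℝ) + (q.2 : ℝ)
  | some (c, _) => q.1 + q.2 = c

/-- Specification of a good rational approximation of a real move. -/
def SpecOut (μ : Measure Cantor) (s : ℝ) (t : List Bool) (prev : Option (ℚ × ℝ))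
    (p : ℝ × ℝ) (q : ℚ × ℚ) : Prop :=
  okp μ t ((q.1 : ℝ), (q.2 : ℝ)) ∧ sumOKQ s prev q ∧
  (q.1 = 0 ↔ p.1 = 0) ∧ (q.2 = 0 ↔ p.2 = 0) ∧
  (p.1 ≠ 0 → (q.1 : ℝ) < p.1) ∧ (p.2 ≠ 0 → (q.2 : ℝ) < p.2)

lemma MM_nonneg (μ : Measure Cantor) (t : List Bool) (b : Bool) : 0 ≤ MM μ t b :=
  ENNReal.toReal_nonneg

lemma ok1_of {M a : ℝ} (h0 : 0 ≤ a) (hlt : a < M) : ok1 M a := ⟨h0, le_of_lt hlt, fun _ => hlt⟩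

lemma ok1_zero {M : ℝ} (hM : 0 ≤ M) : ok1 M 0 := ⟨le_refl 0, hM, fun h => h⟩

lemma ok1_lt {M a : ℝ} (h : ok1 M a) (ha : 0 < a) : a < M := h.2.2 (lt_of_lt_of_le ha h.2.1)

lemma exists_approx (μ : Measure Cantor) (s : ℝ) (t : List Bool) (prev : Option (ℚ × ℝ))
    (p : ℝ × ℝ) (hRL : RL μ s t prev p) (hinv : Inv prev) (hs0 : 0 ≤ s) :
    ∃ q : ℚ × ℚ, SpecOut μ s t prev p q := by
  obtain ⟨a, b⟩ := p
  obtain ⟨⟨⟨ha0, haA, haA'⟩, hb0, hbB, hbB'⟩, hsum⟩ := hRL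
  simp only at ha0 haA haA' hb0 hbB hbB' hsum ⊢
  set A := MM μ t false with hA_def
  set B := MM μ t true with hB_def
  cases prev with
  | none =>
    simp only [sumOK] at hsum
    by_cases ha : a = 0
    · -- a = 0, so b > s ≥ 0
      have hb : s < b := by rw [ha] at hsum; linarith
      have hbpos : 0 < b := lt_of_le_of_lt hs0 hb
      have hbB2 : b < B := ok1_lt ⟨hb0, hbB, hbB'⟩ hbpos
      obtain ⟨q, hq1, hq2⟩ := exists_rat_btwn hb
      have hqpos : (0:ℝ) < (q:ℝ) := lt_of_le_of_lt hs0 hq1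
      refine ⟨(0, q), ⟨⟨?_, ?_⟩, ?_, ?_, ?_, ?_, ?_⟩⟩
      · simpa using ok1_zero (MM_nonneg μ t false)
      · exact ok1_of (le_of_lt hqpos) (lt_of_lt_of_le hq2 hbB)
      · simpa [sumOKQ] using hq1
      · simpa using ha
      · constructor
        · intro h; exact absurd h (by exact_mod_cast ne_of_gt hqpos)
        · intro h; exact absurd h (ne_of_gt hbpos)
      · intro h; exact absurd ha h
      · intro _; exact hq2
    · by_cases hb' : b = 0
      · have hapos : 0 < a := lt_of_le_of_ne ha0 (Ne.symm ha)
        have haa : s < a := by rw [hb'] at hsum; linarith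
        have haA2 : a < A := ok1_lt ⟨ha0, haA, haA'⟩ hapos
        obtain ⟨q, hq1, hq2⟩ := exists_rat_btwn haa
        have hqpos : (0:ℝ) < (q:ℝ) := lt_of_le_of_lt hs0 hq1
        refine ⟨(q, 0), ⟨⟨?_, ?_⟩, ?_, ?_, ?_, ?_, ?_⟩⟩
        · exact ok1_of (le_of_lt hqpos) (lt_of_lt_of_le hq2 haA)
        · simpa using ok1_zero (MM_nonneg μ t true)
        · simpa [sumOKQ] using hq1
        · constructor
          · intro h; exact absurd h (by exact_mod_cast ne_of_gt hqpos)
          · intro h; exact absurd h ha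
        · simpa using hb'
        · intro _; exact hq2
        · intro h; exact absurd hb' h
      · -- both positive
        have hapos : 0 < a := lt_of_le_of_ne ha0 (Ne.symm ha)
        have hbpos : 0 < b := lt_of_le_of_ne hb0 (Ne.symm hb')
        have haA2 : a < A := ok1_lt ⟨ha0, haA, haA'⟩ hapos
        have hbB2 : b < B := ok1_lt ⟨hb0, hbB, hbB'⟩ hbpos
        set e : ℝ := (a + b - s) / 2 with he_def
        have hepos : 0 < e := by simp only [he_def]; linarith
        have h1 : max (a - e) 0 < a := max_lt (by linarith) hapos
        have h2 : max (b - e) 0 < b := max_lt (by linarith) hbpos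
        obtain ⟨q1, hq11, hq12⟩ := exists_rat_btwn h1
        obtain ⟨q2, hq21, hq22⟩ := exists_rat_btwn h2
        have hq1pos : (0:ℝ) < (q1:ℝ) := lt_of_le_of_lt (le_max_right _ _) hq11
        have hq2pos : (0:ℝ) < (q2:ℝ) := lt_of_le_of_lt (le_max_right _ _) hq21
        have hq1e : a - e < (q1:ℝ) := lt_of_le_of_lt (le_max_left _ _) hq11
        have hq2e : b - e < (q2:ℝ) := lt_of_le_of_lt (le_max_left _ _) hq21
        refine ⟨(q1, q2), ⟨⟨?_, ?_⟩, ?_, ?_, ?_, ?_, ?_⟩⟩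
        · exact ok1_of (le_of_lt hq1pos) (lt_of_lt_of_le hq12 haA)
        · exact ok1_of (le_of_lt hq2pos) (lt_of_lt_of_le hq22 hbB)
        · show s < (q1:ℝ) + (q2:ℝ); simp only [he_def] at hq1e hq2e; linarith
        · constructor
          · intro h; exact absurd h (by exact_mod_cast ne_of_gt hq1pos)
          · intro h; exact absurd h ha
        · constructor
          · intro h; exact absurd h (by exact_mod_cast ne_of_gt hq2pos)
          · intro h; exact absurd h hb'
        · intro _; exact hq12
        · intro _; exact hq22
  | some pr =>
    obtain ⟨c, cR⟩ := pr
    obtain ⟨hc, hcR⟩ := hinv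
    have hcpos : (0:ℝ) < (c:ℝ) := by exact_mod_cast hc
    simp only [sumOK] at hsum
    by_cases ha : a = 0
    · -- b = cR, take (0, c)
      have hb : b = cR := by rw [ha] at hsum; linarith
      have hbpos : 0 < b := by rw [hb]; linarith
      have hbB2 : b < B := ok1_lt ⟨hb0, hbB, hbB'⟩ hbpos
      refine ⟨(0, c), ⟨⟨?_, ?_⟩, ?_, ?_, ?_, ?_, ?_⟩⟩
      · simpa using ok1_zero (MM_nonneg μ t false)
      · exact ok1_of (le_of_lt hcpos) (by rw [← hb] at hcR; exact lt_of_lt_of_le hcR hbB)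
      · show (0:ℚ) + c = c; ring
      · simpa using ha
      · constructor
        · intro h; exact absurd h (ne_of_gt hc)
        · intro h; exact absurd h (ne_of_gt hbpos)
      · intro h; exact absurd ha h
      · intro _; rw [hb]; exact hcR
    · by_cases hb' : b = 0
      · have haa : a = cR := by rw [hb'] at hsum; linarith
        have hapos : 0 < a := by rw [haa]; linarith
        have haA2 : a < A := ok1_lt ⟨ha0, haA, haA'⟩ hapos
        refine ⟨(c, 0), ⟨⟨?_, ?_⟩, ?_, ?_, ?_, ?_, ?_⟩⟩
        · exact ok1_of (le_of_lt hcpos) (by rw [← haa] at hcR; exact lt_of_lt_of_le hcR haA)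
        · simpa using ok1_zero (MM_nonneg μ t true)
        · show c + (0:ℚ) = c; ring
        · constructor
          · intro h; exact absurd h (ne_of_gt hc)
          · intro h; exact absurd h ha
        · simpa using hb'
        · intro _; rw [haa]; exact hcR
        · intro h; exact absurd hb' h
      · have hapos : 0 < a := lt_of_le_of_ne ha0 (Ne.symm ha)
        have hbpos : 0 < b := lt_of_le_of_ne hb0 (Ne.symm hb')
        have haA2 : a < A := ok1_lt ⟨ha0, haA, haA'⟩ hapos
        have hbB2 : b < B := ok1_lt ⟨hb0, hbB, hbB'⟩ hbpos
        have h1 : max 0 ((c:ℝ) - b) < min a (c:ℝ) :=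
          max_lt (lt_min hapos hcpos) (lt_min (by linarith) (by linarith))
        obtain ⟨q1, hq11, hq12⟩ := exists_rat_btwn h1
        have hq1pos : (0:ℝ) < (q1:ℝ) := lt_of_le_of_lt (le_max_left _ _) hq11
        have hq1cb : (c:ℝ) - b < (q1:ℝ) := lt_of_le_of_lt (le_max_right _ _) hq11
        have hq1a : (q1:ℝ) < a := lt_of_lt_of_le hq12 (min_le_left _ _)
        have hq1c : (q1:ℝ) < (c:ℝ) := lt_of_lt_of_le hq12 (min_le_right _ _)
        refine ⟨(q1, c - q1), ⟨⟨?_, ?_⟩, ?_, ?_, ?_, ?_, ?_⟩⟩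
        · exact ok1_of (le_of_lt hq1pos) (lt_of_lt_of_le hq1a haA)
        · refine ok1_of ?_ ?_
          · push_cast; linarith
          · push_cast
            have h2 : (c:ℝ) - (q1:ℝ) < b := by linarith
            linarith [lt_of_lt_of_le h2 hbB]
        · show q1 + (c - q1) = c; ring
        · constructor
          · intro h; exact absurd h (by exact_mod_cast ne_of_gt hq1pos)
          · intro h; exact absurd h ha
        · constructor
          · intro h
            have h3 : q1 = c := by linarith [sub_eq_zero.mp h]
            exact absurd (show (q1:ℝ) = (c:ℝ) by exact_mod_cast h3) (ne_of_lt hq1c)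
          · intro h; exact absurd h hb'
        · intro _; exact hq1a
        · intro _; push_cast; linarith

open Classical in
/-- The rational approximation of a real move. -/
noncomputable def step (μ : Measure Cantor) (s : ℝ) (t : List Bool) (prev : Option (ℚ × ℝ))
    (p : ℝ × ℝ) : ℚ × ℚ :=
  if h : RL μ s t prev p ∧ Inv prev ∧ 0 ≤ s then
    (exists_approx μ s t prev p h.1 h.2.1 h.2.2).choose
  else (-1, -1)

lemma step_spec {μ : Measure Cantor} {s : ℝ} {t : List Bool} {prev : Option (ℚ × ℝ)}
    {p : ℝ × ℝ} (h1 : RL μ s t prev p) (h2 : Inv prev) (h3 : 0 ≤ s) :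
    SpecOut μ s t prev p (step μ s t prev p) := by
  rw [step, dif_pos ⟨h1, h2, h3⟩]
  exact (exists_approx μ s t prev p h1 h2 h3).choose_spec

lemma step_neg {μ : Measure Cantor} {s : ℝ} {t : List Bool} {prev : Option (ℚ × ℝ)}
    {p : ℝ × ℝ} (h : ¬ RL μ s t prev p) : step μ s t prev p = (-1, -1) := by
  rw [step, dif_neg]; intro hh; exact h hh.1

section Transfer

variable {μ : Measure Cantor} {s : ℝ} {A : Set Cantor}
variable {r : Run} {r' : RunR} {ctx : ℕ → Option (ℚ × ℝ)}

/-- `mOKR` is definitionally an `ok1` statement. -/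
lemma mOKR_iff (n : ℕ) (b : Bool) :
    mOKR μ r' n b ↔ ok1 (MM μ (pathR r' n) b) (selP (r' n).1 b) := Iff.rfl

lemma valIR_eq (n : ℕ) (b : Bool) : valIR r' n b = selP (r' n).1 b := rfl

lemma valI_eq (n : ℕ) (b : Bool) : valI r n b = selQ (r n).1 b := rfl

lemma selP_pair (q : ℚ × ℚ) (b : Bool) : selP ((q.1 : ℝ), (q.2 : ℝ)) b = (selQ q b : ℝ) := by
  cases b <;> rfl

/-- Real-move legality at round `n` is `IOKR`, given the context bookkeeping. -/
lemma RL_iff_IOKR (H3 : ctx 0 = none) (H4 : ∀ n, ctx (n+1) = some (sel r n, selR r' n)) :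
    ∀ n, (RL μ s (pathR r' n) (ctx n) (r' n).1 ↔ IOKR μ s r' n) := by
  intro n
  cases n with
  | zero =>
    rw [H3]
    show okp μ (pathR r' 0) (r' 0).1 ∧ s < (r' 0).1.1 + (r' 0).1.2 ↔ _
    show _ ↔ mOKR μ r' 0 false ∧ mOKR μ r' 0 true ∧ s < (r' 0).1.1 + (r' 0).1.2
    unfold okp
    rw [mOKR_iff, mOKR_iff]
    simp only [selP, Bool.false_eq_true, if_false, if_true]
    tauto
  | succ n =>
    rw [H4 n]
    show okp μ (pathR r' (n+1)) (r' (n+1)).1 ∧ (r' (n+1)).1.1 + (r' (n+1)).1.2 = selR r' n ↔ _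
    show _ ↔ mOKR μ r' (n+1) false ∧ mOKR μ r' (n+1) true ∧
      (r' (n+1)).1.1 + (r' (n+1)).1.2 = selR r' n
    unfold okp
    rw [mOKR_iff, mOKR_iff]
    simp only [selP, Bool.false_eq_true, if_false, if_true]
    tauto

/-- If the rational move satisfies the specification, it is legal. -/
lemma IOK_of_spec (H3 : ctx 0 = none) (H4 : ∀ n, ctx (n+1) = some (sel r n, selR r' n))
    (n : ℕ) (hsp : SpecOut μ s (pathR r' n) (ctx n) (r' n).1 ((r n).1))
    (hp : path r n = pathR r' n) : IOK μ s r n := by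
  obtain ⟨⟨hf, ht⟩, hsum, -⟩ := hsp
  have hmok : ∀ b, mOK μ r n b := by
    intro b
    have h1 : ok1 (MM μ (pathR r' n) b) ((selQ (r n).1 b : ℝ)) := by
      rw [← selP_pair]; cases b
      · exact hf
      · exact ht
    obtain ⟨o1, o2, o3⟩ := h1
    refine ⟨by exact_mod_cast o1, ?_, ?_⟩
    · rw [valI_eq, hp]; exact o2
    · rw [valI_eq, hp]; exact o3
  cases n with
  | zero =>
    refine ⟨hmok false, hmok true, ?_⟩
    rw [H3] at hsum
    exact hsum
  | succ n =>
    refine ⟨hmok false, hmok true, ?_⟩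
    rw [H4 n] at hsum
    exact hsum

lemma not_IOK_of_neg (n : ℕ) (hneg : (r n).1 = (-1, -1)) : ¬ IOK μ s r n := by
  intro hIOK
  have h1 : mOK μ r n false := by cases n <;> exact hIOK.1
  have h2 : (0:ℚ) ≤ valI r n false := h1.1
  rw [valI_eq, hneg] at h2
  norm_num [selQ] at h2

variable (hs0 : 0 ≤ s)
variable (H1 : ∀ n, bits r n = bitsR r' n)
variable (H2 : ∀ n, (r n).1 = step μ s (path r n) (ctx n) (r' n).1)
variable (H3 : ctx 0 = none)
variable (H4 : ∀ n, ctx (n+1) = some (sel r n, selR r' n))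

include H1 in
lemma path_eq (n : ℕ) : path r n = pathR r' n := by
  unfold path pathR
  exact List.map_congr_left (fun i _ => H1 i)

include hs0 H1 H2 H3 H4 in
lemma round_iff (n : ℕ) (hinv : Inv (ctx n)) : IOK μ s r n ↔ IOKR μ s r' n := by
  by_cases hRL : RL μ s (pathR r' n) (ctx n) (r' n).1
  · have hsp := step_spec hRL hinv hs0
    rw [← path_eq H1 n, ← H2 n] at hsp
    rw [path_eq H1 n] at hsp
    exact iff_of_true (IOK_of_spec H3 H4 n hsp (path_eq H1 n)) ((RL_iff_IOKR H3 H4 n).1 hRL)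
  · refine iff_of_false ?_ fun h => hRL ((RL_iff_IOKR H3 H4 n).2 h)
    apply not_IOK_of_neg n
    rw [H2 n, path_eq H1 n]
    exact step_neg hRL

include hs0 H1 H2 H3 H4 in
lemma round_II (n : ℕ) (hinv : Inv (ctx n)) (hI : IOK μ s r n) :
    IIOK r n ↔ IIOKR r' n := by
  have hRL : RL μ s (pathR r' n) (ctx n) (r' n).1 := by
    by_contra hRL
    exact not_IOK_of_neg n (by rw [H2 n, path_eq H1 n]; exact step_neg hRL) hI
  have hsp := step_spec hRL hinv hs0
  rw [← path_eq H1 n, ← H2 n] at hsp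
  obtain ⟨-, -, hz1, hz2, -, -⟩ := hsp
  show sel r n ≠ 0 ↔ selR r' n ≠ 0
  have hsel : sel r n = selQ (r n).1 (bits r n) := rfl
  have hselR : selR r' n = selP (r' n).1 (bits r n) := by rw [H1 n]; rfl
  rw [hsel, hselR]
  cases hb : bits r n
  · simp only [selQ, selP, Bool.false_eq_true, if_false]
    exact not_congr (by exact_mod_cast hz1)
  · simp only [selQ, selP, if_true]
    exact not_congr (by exact_mod_cast hz2)

include hs0 H1 H2 H3 H4 in
lemma round_inv (n : ℕ) (hinv : Inv (ctx n)) (hI : IOK μ s r n) (hII : IIOK r n) :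
    Inv (ctx (n+1)) := by
  have hRL : RL μ s (pathR r' n) (ctx n) (r' n).1 := by
    by_contra hRL
    exact not_IOK_of_neg n (by rw [H2 n, path_eq H1 n]; exact step_neg hRL) hI
  have hsp := step_spec hRL hinv hs0
  rw [← path_eq H1 n, ← H2 n] at hsp
  obtain ⟨-, -, hz1, hz2, hl1, hl2⟩ := hsp
  rw [H4 n]
  have hII' : selQ (r n).1 (bits r n) ≠ 0 := hII
  have hok : ∀ b, mOK μ r n b := by
    intro b; cases n
    · cases b; exacts [hI.1, hI.2.1]
    · cases b; exacts [hI.1, hI.2.1]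
  have hnn : (0:ℚ) ≤ selQ (r n).1 (bits r n) := by
    have := (hok (bits r n)).1
    rwa [valI_eq] at this
  have hpos : 0 < selQ (r n).1 (bits r n) := lt_of_le_of_ne hnn (Ne.symm hII')
  have hselq : sel r n = selQ (r n).1 (bits r n) := rfl
  have hselR : selR r' n = selP (r' n).1 (bits r n) := by rw [H1 n]; rfl
  refine ⟨by rw [hselq]; exact hpos, ?_⟩
  rw [hselq, hselR]
  cases hb : bits r n
  · rw [hb] at hpos
    simp only [selQ, selP, Bool.false_eq_true, if_false] at hpos ⊢
    apply hl1
    intro h0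
    rw [hz1.2 h0] at hpos
    exact lt_irrefl _ hpos
  · rw [hb] at hpos
    simp only [selQ, selP, if_true] at hpos ⊢
    apply hl2
    intro h0
    rw [hz2.2 h0] at hpos
    exact lt_irrefl _ hpos

include hs0 H1 H2 H3 H4 in
lemma master : ∀ n, (∀ m < n, IOK μ s r m ∧ IIOK r m) →
    (∀ m < n, IOKR μ s r' m ∧ IIOKR r' m) ∧ Inv (ctx n) := by
  intro n
  induction n with
  | zero =>
    intro _
    refine ⟨fun m hm => absurd hm (Nat.not_lt_zero m), ?_⟩
    rw [H3]; trivial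
  | succ n ih =>
    intro h
    obtain ⟨hR, hinv⟩ := ih (fun m hm => h m (hm.trans (Nat.lt_succ_self n)))
    have hn := h n (Nat.lt_succ_self n)
    have hIOKR := (round_iff hs0 H1 H2 H3 H4 n hinv).1 hn.1
    have hIIOKR := (round_II hs0 H1 H2 H3 H4 n hinv hn.1).1 hn.2
    refine ⟨?_, round_inv hs0 H1 H2 H3 H4 n hinv hn.1 hn.2⟩
    intro m hm
    rcases Nat.lt_succ_iff_lt_or_eq.1 hm with h' | h'
    · exact hR m h'
    · subst h'; exact ⟨hIOKR, hIIOKR⟩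

include hs0 H1 H2 H3 H4 in
/-- Main transfer: if II wins the simulated rational run, II wins the real run. -/
lemma winsrun_imp (h : IIWinsRun μ s A r) : IIWinsRunR μ s A r' := by
  rcases h with ⟨n, hpre, hn⟩ | ⟨hall, hA⟩
  · left
    obtain ⟨hR, hinv⟩ := master hs0 H1 H2 H3 H4 n hpre
    exact ⟨n, hR, fun hI => hn ((round_iff hs0 H1 H2 H3 H4 n hinv).2 hI)⟩
  · right
    constructor
    · intro n
      obtain ⟨-, hinv⟩ := master hs0 H1 H2 H3 H4 n (fun m _ => hall m)
      exact ⟨(round_iff hs0 H1 H2 H3 H4 n hinv).1 (hall n).1,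
        (round_II hs0 H1 H2 H3 H4 n hinv (hall n).1).1 (hall n).2⟩
    · have hb : bits r = bitsR r' := funext H1
      rwa [hb] at hA

end Transfer

/-! ### Embedding the rational game into the real game -/

/-- Cast a rational round to a real round. -/
def castRound (x : GRound) : GRoundR := (((x.1.1 : ℝ), (x.1.2 : ℝ)), x.2)

/-- Cast a rational run to a real run. -/
def castRun (r : Run) : RunR := fun n => castRound (r n)

section Cast

variable {μ : Measure Cantor} {s : ℝ} {A : Set Cantor} {r : Run}

lemma castRun_bits (n : ℕ) : bitsR (castRun r) n = bits r n := rfl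

lemma castRun_path (n : ℕ) : pathR (castRun r) n = path r n := rfl

lemma castRun_valIR (n : ℕ) (b : Bool) : valIR (castRun r) n b = ((valI r n b : ℚ) : ℝ) := by
  cases b <;> rfl

lemma castRun_selR (n : ℕ) : selR (castRun r) n = ((sel r n : ℚ) : ℝ) := castRun_valIR n _

lemma castRun_mOKR (n : ℕ) (b : Bool) : mOKR μ (castRun r) n b ↔ mOK μ r n b := by
  rw [mOKR_iff]
  constructor
  · rintro ⟨o1, o2, o3⟩
    have e : selP (castRun r n).1 b = ((valI r n b : ℚ) : ℝ) := castRun_valIR n b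
    rw [e] at o1 o2 o3
    exact ⟨by exact_mod_cast o1, by rw [castRun_path] at o2; exact o2,
      by rw [castRun_path] at o3; exact o3⟩
  · rintro ⟨o1, o2, o3⟩
    have e : selP (castRun r n).1 b = ((valI r n b : ℚ) : ℝ) := castRun_valIR n b
    show ok1 _ _
    rw [e, castRun_path]
    exact ⟨by exact_mod_cast o1, o2, o3⟩

lemma castRun_IOKR (n : ℕ) : IOKR μ s (castRun r) n ↔ IOK μ s r n := by
  cases n with
  | zero =>
    show mOKR μ (castRun r) 0 false ∧ mOKR μ (castRun r) 0 true ∧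
        s < ((r 0).1.1 : ℝ) + ((r 0).1.2 : ℝ) ↔ _
    rw [castRun_mOKR, castRun_mOKR]
    rfl
  | succ n =>
    show mOKR μ (castRun r) (n+1) false ∧ mOKR μ (castRun r) (n+1) true ∧
        ((r (n+1)).1.1 : ℝ) + ((r (n+1)).1.2 : ℝ) = selR (castRun r) n ↔ _
    rw [castRun_mOKR, castRun_mOKR, castRun_selR]
    show _ ∧ _ ∧ _ ↔ _ ∧ _ ∧ ((r (n+1)).1.1 + (r (n+1)).1.2 = sel r n)
    constructor
    · rintro ⟨a, b, c⟩; exact ⟨a, b, by exact_mod_cast c⟩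
    · rintro ⟨a, b, c⟩; exact ⟨a, b, by exact_mod_cast c⟩

lemma castRun_IIOKR (n : ℕ) : IIOKR (castRun r) n ↔ IIOK r n := by
  show selR (castRun r) n ≠ 0 ↔ sel r n ≠ 0
  rw [castRun_selR]
  exact not_congr (by exact_mod_cast Iff.rfl)

lemma castRun_IIWinsRunR : IIWinsRunR μ s A (castRun r) ↔ IIWinsRun μ s A r := by
  unfold IIWinsRunR IIWinsRun
  constructor
  · rintro (⟨n, hpre, hn⟩ | ⟨hall, hA⟩)
    · exact Or.inl ⟨n, fun m hm => ⟨(castRun_IOKR m).1 (hpre m hm).1,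
        (castRun_IIOKR m).1 (hpre m hm).2⟩, fun h => hn ((castRun_IOKR n).2 h)⟩
    · exact Or.inr ⟨fun n => ⟨(castRun_IOKR n).1 (hall n).1, (castRun_IIOKR n).1 (hall n).2⟩,
        by rwa [show bitsR (castRun r) = bits r from funext castRun_bits] at hA⟩
  · rintro (⟨n, hpre, hn⟩ | ⟨hall, hA⟩)
    · exact Or.inl ⟨n, fun m hm => ⟨(castRun_IOKR m).2 (hpre m hm).1,
        (castRun_IIOKR m).2 (hpre m hm).2⟩, fun h => hn ((castRun_IOKR n).1 h)⟩
    · exact Or.inr ⟨fun n => ⟨(castRun_IOKR n).2 (hall n).1, (castRun_IIOKR n).2 (hall n).2⟩,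
        by rwa [show bitsR (castRun r) = bits r from funext castRun_bits]⟩

end Cast

open Classical in
/-- A left inverse of the cast `ℚ → ℝ`. -/
noncomputable def toQ (x : ℝ) : ℚ := if h : ∃ q : ℚ, (q : ℝ) = x then h.choose else 0

lemma toQ_cast (q : ℚ) : toQ ((q : ℝ)) = q := by
  have h : ∃ p : ℚ, ((p : ℝ) = (q : ℝ)) := ⟨q, rfl⟩
  rw [toQ, dif_pos h]
  exact Rat.cast_injective h.choose_spec

/-- Decode a real round whose values are casts of rationals. -/
noncomputable def decode (x : GRoundR) : GRound := ((toQ x.1.1, toQ x.1.2), x.2)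

section Easy

variable {μ : Measure Cantor} {s : ℝ} {A : Set Cantor}

lemma winsI_imp : WinsI μ s A → WinsIR μ s A := by
  rintro ⟨σ, hσ⟩
  refine ⟨fun h => (((σ (h.map decode)).1 : ℝ), ((σ (h.map decode)).2 : ℝ)), ?_⟩
  intro r' hcons
  set r : Run := fun n => (σ ((histR r' n).map decode), (r' n).2) with hr
  have C1 : ∀ m, decode (r' m) = r m := by
    intro m
    have h1 := hcons m
    show ((toQ (r' m).1.1, toQ (r' m).1.2), (r' m).2) = _
    have e1 : (r' m).1.1 = ((σ ((histR r' m).map decode)).1 : ℝ) := by rw [h1]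
    have e2 : (r' m).1.2 = ((σ ((histR r' m).map decode)).2 : ℝ) := by rw [h1]
    rw [e1, e2, toQ_cast, toQ_cast]
  have C2 : castRun r = r' := by
    funext n
    have h1 := hcons n
    show ((((r n).1.1 : ℝ), ((r n).1.2 : ℝ)), (r n).2) = r' n
    refine Prod.ext ?_ rfl
    show (((r n).1.1 : ℝ), ((r n).1.2 : ℝ)) = (r' n).1
    rw [h1]
  have C3 : ConsI σ r := by
    intro n
    show (σ ((histR r' n).map decode)) = σ (hist r n)
    congr 1
    unfold histR hist
    rw [List.map_map]
    exact List.map_congr_left (fun m _ => C1 m)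
  have hwin := hσ r C3
  rw [← C2]
  rw [castRun_IIWinsRunR]
  exact hwin

lemma winsIIR_imp : WinsIIR μ s A → WinsII μ s A := by
  rintro ⟨τ', hτ'⟩
  refine ⟨fun h q => τ' (h.map castRound) ((q.1 : ℝ), (q.2 : ℝ)), ?_⟩
  intro r hcons
  have hhist : ∀ n, (hist r n).map castRound = histR (castRun r) n := by
    intro n; unfold hist histR; rw [List.map_map]; rfl
  have hcons' : ConsIIR τ' (castRun r) := by
    intro n
    show (r n).2 = τ' (histR (castRun r) n) (castRun r n).1
    rw [← hhist n]
    exact hcons n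
  exact castRun_IIWinsRunR.1 (hτ' (castRun r) hcons')

end Easy

/-! ### The simulation machinery for the hard directions -/

/-- Simulated rational history (and context) built from a prefix of a real run. -/
noncomputable def simQ (μ : Measure Cantor) (s : ℝ) (f : ℕ → GRoundR) :
    ℕ → List GRound × Option (ℚ × ℝ)
  | 0 => ([], none)
  | n+1 =>
    ((simQ μ s f n).1 ++
      [(step μ s ((List.range n).map (fun i => (f i).2)) (simQ μ s f n).2 (f n).1, (f n).2)],
     some (selQ (step μ s ((List.range n).map (fun i => (f i).2)) (simQ μ s f n).2 (f n).1)
             (f n).2,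
           selP (f n).1 (f n).2))

lemma simQ_stable {μ : Measure Cantor} {s : ℝ} {f g : ℕ → GRoundR} :
    ∀ n, (∀ i < n, f i = g i) → simQ μ s f n = simQ μ s g n := by
  intro n
  induction n with
  | zero => intro _; rfl
  | succ n ih =>
    intro h
    have e1 : simQ μ s f n = simQ μ s g n := ih (fun i hi => h i (Nat.lt_succ_of_lt hi))
    have e2 : (List.range n).map (fun i => (f i).2) = (List.range n).map (fun i => (g i).2) :=
      List.map_congr_left (fun i hi => by rw [h i (Nat.lt_succ_of_lt (List.mem_range.1 hi))])
    show simQ μ s f (n+1) = simQ μ s g (n+1)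
    simp only [simQ]
    rw [e1, e2, h n (Nat.lt_succ_self n)]

/-- Simulated real history (and context) built from the bits of a rational run, when
player I follows the real strategy `σ'`. -/
noncomputable def simH (μ : Measure Cantor) (s : ℝ) (σ' : StratIR) (f : ℕ → Bool) :
    ℕ → List GRoundR × Option (ℚ × ℝ)
  | 0 => ([], none)
  | n+1 =>
    ((simH μ s σ' f n).1 ++ [(σ' (simH μ s σ' f n).1, f n)],
     some (selQ (step μ s ((List.range n).map f) (simH μ s σ' f n).2
             (σ' (simH μ s σ' f n).1)) (f n),
           selP (σ' (simH μ s σ' f n).1) (f n)))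

lemma simH_stable {μ : Measure Cantor} {s : ℝ} {σ' : StratIR} {f g : ℕ → Bool} :
    ∀ n, (∀ i < n, f i = g i) → simH μ s σ' f n = simH μ s σ' g n := by
  intro n
  induction n with
  | zero => intro _; rfl
  | succ n ih =>
    intro h
    have e1 : simH μ s σ' f n = simH μ s σ' g n := ih (fun i hi => h i (Nat.lt_succ_of_lt hi))
    have e2 : (List.range n).map f = (List.range n).map g :=
      List.map_congr_left (fun i hi => h i (Nat.lt_succ_of_lt (List.mem_range.1 hi)))
    show simH μ s σ' f (n+1) = simH μ s σ' g (n+1)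
    simp only [simH]
    rw [e1, e2, h n (Nat.lt_succ_self n)]

section Hard

variable {μ : Measure Cantor} {s : ℝ} {A : Set Cantor}

lemma winsII_imp (hs0 : 0 ≤ s) : WinsII μ s A → WinsIIR μ s A := by
  rintro ⟨τ, hτ⟩
  refine ⟨fun h p => τ (simQ μ s (fun i => h.getD i default) h.length).1
      (step μ s (h.map Prod.snd) (simQ μ s (fun i => h.getD i default) h.length).2 p), ?_⟩
  intro r' hcons
  set r : Run := fun n => (step μ s (pathR r' n) ((simQ μ s r' n).2) (r' n).1, (r' n).2)
    with hr
  have H1 : ∀ n, bits r n = bitsR r' n := fun n => rfl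
  have H2 : ∀ n, (r n).1 = step μ s (path r n) ((simQ μ s r' n).2) (r' n).1 := by
    intro n
    show step μ s (pathR r' n) _ _ = _
    rw [path_eq H1 n]
  have H3 : (simQ μ s r' 0).2 = none := rfl
  have H4 : ∀ n, (simQ μ s r' (n+1)).2 = some (sel r n, selR r' n) := by
    intro n
    show (simQ μ s r' (n+1)).2 = _
    simp only [simQ]
    rfl
  have hhist : ∀ n, (simQ μ s r' n).1 = hist r n := by
    intro n
    induction n with
    | zero => rfl
    | succ n ih =>
      show (simQ μ s r' n).1 ++ _ = _
      rw [ih]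
      show hist r n ++ [r n] = hist r (n+1)
      unfold hist
      rw [List.range_succ, List.map_append]
      rfl
  have hconsII : ConsII τ r := by
    intro n
    show (r' n).2 = τ (hist r n) (r n).1
    rw [hcons n]
    have hlen : (histR r' n).length = n := by simp [histR]
    have hgetD : ∀ i < n, (histR r' n).getD i default = r' i := by
      intro i hi
      unfold histR
      rw [List.getD_eq_getElem _ _ (by simpa using hi)]
      simp
    have hsim : simQ μ s (fun i => (histR r' n).getD i default) (histR r' n).length
        = simQ μ s r' n := by
      rw [hlen]
      exact simQ_stable n hgetD
    have hmap : (histR r' n).map Prod.snd = pathR r' n := by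
      unfold histR pathR
      rw [List.map_map]
      rfl
    show τ (simQ μ s (fun i => (histR r' n).getD i default) (histR r' n).length).1
        (step μ s ((histR r' n).map Prod.snd)
          (simQ μ s (fun i => (histR r' n).getD i default) (histR r' n).length).2 (r' n).1) = _
    rw [hsim, hmap, hhist n]
  exact winsrun_imp hs0 H1 H2 H3 H4 (hτ r hconsII)

lemma winsIR_imp (hs0 : 0 ≤ s) : WinsIR μ s A → WinsI μ s A := by
  rintro ⟨σ', hσ'⟩
  refine ⟨fun h => step μ s (h.map Prod.snd)
      (simH μ s σ' (fun i => (h.getD i default).2) h.length).2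
      (σ' (simH μ s σ' (fun i => (h.getD i default).2) h.length).1), ?_⟩
  intro r hcons
  set r' : RunR := fun n => (σ' ((simH μ s σ' (bits r) n).1), bits r n) with hr'
  have H1 : ∀ n, bits r n = bitsR r' n := fun n => rfl
  have E : ∀ n, (r n).1 = step μ s (path r n) ((simH μ s σ' (bits r) n).2)
      (σ' (simH μ s σ' (bits r) n).1) := by
    intro n
    rw [hcons n]
    have hlen : (hist r n).length = n := by simp [hist]
    have hgetD : ∀ i < n, ((hist r n).getD i default).2 = bits r i := by
      intro i hi
      unfold hist
      rw [List.getD_eq_getElem _ _ (by simpa using hi)]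
      simp [bits]
    have hsim : simH μ s σ' (fun i => ((hist r n).getD i default).2) (hist r n).length
        = simH μ s σ' (bits r) n := by
      rw [hlen]
      exact simH_stable n hgetD
    have hmap : (hist r n).map Prod.snd = path r n := by
      unfold hist path
      rw [List.map_map]
      rfl
    show step μ s ((hist r n).map Prod.snd)
        (simH μ s σ' (fun i => ((hist r n).getD i default).2) (hist r n).length).2
        (σ' (simH μ s σ' (fun i => ((hist r n).getD i default).2) (hist r n).length).1) = _
    rw [hsim, hmap]
  have H2 : ∀ n, (r n).1 = step μ s (path r n) ((simH μ s σ' (bits r) n).2) (r' n).1 := E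
  have H3 : (simH μ s σ' (bits r) 0).2 = none := rfl
  have H4 : ∀ n, (simH μ s σ' (bits r) (n+1)).2 = some (sel r n, selR r' n) := by
    intro n
    show (simH μ s σ' (bits r) (n+1)).2 = _
    simp only [simH]
    have : step μ s ((List.range n).map (bits r)) ((simH μ s σ' (bits r) n).2)
        (σ' (simH μ s σ' (bits r) n).1) = (r n).1 := (E n).symm
    rw [this]
    rfl
  have hhist : ∀ n, (simH μ s σ' (bits r) n).1 = histR r' n := by
    intro n
    induction n with
    | zero => rfl
    | succ n ih =>
      show (simH μ s σ' (bits r) n).1 ++ [(σ' (simH μ s σ' (bits r) n).1, bits r n)] = _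
      rw [ih]
      have hrn : r' n = (σ' (histR r' n), bits r n) := by
        show (σ' ((simH μ s σ' (bits r) n).1), bits r n) = _
        rw [ih]
      rw [← hrn]
      show histR r' n ++ [r' n] = histR r' (n+1)
      unfold histR
      rw [List.range_succ, List.map_append]
      rfl
  have hconsIR : ConsIR σ' r' := by
    intro n
    show σ' ((simH μ s σ' (bits r) n).1) = σ' (histR r' n)
    rw [hhist n]
  intro hwin
  exact hσ' r' hconsIR (winsrun_imp hs0 H1 H2 H3 H4 hwin)

end Hard
end Aux

/-- The rational measure game `G(s, A)` is equivalent to the real-valued game `G'(s, A)`: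
each player has a winning strategy in one iff they have one in the other. -/
theorem rational_real_game_equivalence (μ : Measure Cantor) [IsProbabilityMeasure μ]
    (A : Set Cantor) (s : ℝ) (hs0 : 0 ≤ s) (hs1 : s < 1) :
    (WinsI μ s A ↔ WinsIR μ s A) ∧ (WinsII μ s A ↔ WinsIIR μ s A) := by
  exact ⟨⟨winsI_imp, winsIR_imp hs0⟩, ⟨winsII_imp hs0, winsIIR_imp⟩⟩

end MeasureGame
end

section
/- Let n ≥ 1 and let {a_i}_{i<n}, {b_i}_{i<n}, {c_i}_{i<n} be non-negative real numbers with b_i > 0 for all i and ∑_{i<n} c_i = 1. Then min_{i<n} ( a_i c_i / b_i² ) ≤ ( ∑_{i<n} a_i ) / ( ∑_{i<n} b_i )². -/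
/-- If `aᵢ, cᵢ ≥ 0`, `bᵢ > 0` and `∑ cᵢ = 1`, then
`minᵢ (aᵢ cᵢ / bᵢ²) ≤ (∑ aᵢ) / (∑ bᵢ)²`. -/
theorem min_ratio_le (n : ℕ) (hn : 1 ≤ n) (a b c : Fin n → ℝ)
    (ha : ∀ i, 0 ≤ a i) (hb : ∀ i, 0 < b i) (hc : ∀ i, 0 ≤ c i)
    (hcsum : ∑ i, c i = 1) :
    Finset.univ.inf' ⟨⟨0, hn⟩, Finset.mem_univ _⟩ (fun i => a i * c i / (b i) ^ 2) ≤
      (∑ i, a i) / (∑ i, b i) ^ 2 := by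
  by_contra h
  push_neg at h
  set S := ∑ i, a i with hSdef
  have hB : 0 < ∑ i, b i :=
    Finset.sum_pos (fun i _ => hb i) ⟨⟨0, hn⟩, Finset.mem_univ _⟩
  have hS : 0 ≤ S := Finset.sum_nonneg fun i _ => ha i
  have hkey : ∀ i, S * (b i) ^ 2 < a i * c i * (∑ i, b i) ^ 2 := by
    intro i
    have h1 : S / (∑ i, b i) ^ 2 < a i * c i / (b i) ^ 2 :=
      lt_of_lt_of_le h (Finset.inf'_le _ (Finset.mem_univ i))
    have hb2 : 0 < (b i) ^ 2 := pow_pos (hb i) 2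
    have hB2 : 0 < (∑ i, b i) ^ 2 := pow_pos hB 2
    rw [div_lt_div_iff₀ hB2 hb2] at h1
    linarith
  have hsqrt : ∀ i, Real.sqrt S * b i < Real.sqrt (a i * c i) * (∑ i, b i) := by
    intro i
    have h2 : Real.sqrt (S * (b i) ^ 2) < Real.sqrt (a i * c i * (∑ i, b i) ^ 2) :=
      Real.sqrt_lt_sqrt (by positivity) (hkey i)
    rwa [Real.sqrt_mul hS, Real.sqrt_mul (mul_nonneg (ha i) (hc i)),
      Real.sqrt_sq (hb i).le, Real.sqrt_sq hB.le] at h2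
  have hsum : Real.sqrt S * (∑ i, b i) < (∑ i, Real.sqrt (a i * c i)) * (∑ i, b i) := by
    calc Real.sqrt S * (∑ i, b i) = ∑ i, Real.sqrt S * b i := by rw [Finset.mul_sum]
      _ < ∑ i, Real.sqrt (a i * c i) * (∑ i, b i) :=
          Finset.sum_lt_sum_of_nonempty ⟨⟨0, hn⟩, Finset.mem_univ _⟩ (fun i _ => hsqrt i)
      _ = (∑ i, Real.sqrt (a i * c i)) * (∑ i, b i) := by rw [Finset.sum_mul]
  have hlt : Real.sqrt S < ∑ i, Real.sqrt (a i * c i) :=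
    lt_of_mul_lt_mul_right hsum hB.le
  have hT : 0 ≤ ∑ i, Real.sqrt (a i * c i) :=
    Finset.sum_nonneg fun i _ => Real.sqrt_nonneg _
  have hcs : (∑ i, Real.sqrt (a i * c i)) ^ 2 ≤ S := by
    have h1 : ∀ i, Real.sqrt (a i * c i) = Real.sqrt (a i) * Real.sqrt (c i) := by
      intro i; exact Real.sqrt_mul (ha i) _
    calc (∑ i, Real.sqrt (a i * c i)) ^ 2
        = (∑ i, Real.sqrt (a i) * Real.sqrt (c i)) ^ 2 := by simp_rw [h1]
      _ ≤ (∑ i, Real.sqrt (a i) ^ 2) * ∑ i, Real.sqrt (c i) ^ 2 :=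
          Finset.sum_mul_sq_le_sq_mul_sq _ _ _
      _ = S * 1 := by
          rw [hSdef, ← hcsum]
          congr 1
          · exact Finset.sum_congr rfl fun i _ => Real.sq_sqrt (ha i)
          · exact Finset.sum_congr rfl fun i _ => Real.sq_sqrt (hc i)
      _ = S := mul_one S
  have h3 : S < (∑ i, Real.sqrt (a i * c i)) ^ 2 := by
    have := Real.sq_sqrt hS
    nlinarith [Real.sqrt_nonneg S]
  linarith
end
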